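/- arXiv:0711.3009 — 10 statements merged into one kernel-verified Lean document; each statement's English description precedes it below -/
import Mathlib

section
/- Let T be an n×n nonnegative real matrix (n ≥ 1), let λ ∈ ℝ, and suppose there exists a strictly positive row vector x̂ (all entries > 0) with x̂ T = λ x̂. Let s > 0 be a real number and let y be a nonzero nonnegative column vector with T y ≥ s y entrywise. Then s = λ if and only if T y = s y. -/
open scoped Matrix

/-- Subinvariance lemma, part (2): if a nonnegative square matrix `T` has a strictly
positive left eigenvector with eigenvalue `λ`, and `y` is a nonzero nonnegative vector
with `T y ≥ s y` entrywise for some `s > 0`, then `s = λ` if and only if `T y = s y`. -/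
theorem subinvariance_part2 (n : ℕ) (hn : 1 ≤ n)
    (T : Matrix (Fin n) (Fin n) ℝ) (hT : ∀ i j, 0 ≤ T i j)
    (lam : ℝ) (x : Fin n → ℝ) (hx : ∀ i, 0 < x i)
    (hxT : Matrix.vecMul x T = lam • x)
    (s : ℝ) (hs : 0 < s)
    (y : Fin n → ℝ) (hy_ne : y ≠ 0) (hy : ∀ i, 0 ≤ y i)
    (hTy : ∀ i, s * y i ≤ (Matrix.mulVec T y) i) :
    s = lam ↔ Matrix.mulVec T y = s • y := by
  have key : x ⬝ᵥ Matrix.mulVec T y = lam * (x ⬝ᵥ y) := by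
    rw [Matrix.dotProduct_mulVec, hxT, smul_dotProduct]
    rfl
  have hxy_pos : 0 < x ⬝ᵥ y := by
    obtain ⟨i, hi⟩ : ∃ i, 0 < y i := by
      by_contra h
      push_neg at h
      exact hy_ne (funext fun i => le_antisymm (h i) (hy i))
    have : ∀ j, 0 ≤ x j * y j := fun j => mul_nonneg (hx j).le (hy j)
    exact Finset.sum_pos' (fun j _ => this j)
      ⟨i, Finset.mem_univ i, mul_pos (hx i) hi⟩
  constructor
  · intro hsl
    -- ∑ x i * (Ty - sy) i = (lam - s) * (x⬝y) = 0, all terms nonneg, x i > 0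
    have hsum : ∑ i, x i * (Matrix.mulVec T y i - s * y i) = 0 := by
      have : ∑ i, x i * (Matrix.mulVec T y i - s * y i)
          = x ⬝ᵥ Matrix.mulVec T y - s * (x ⬝ᵥ y) := by
        simp [dotProduct, mul_sub, Finset.sum_sub_distrib, Finset.mul_sum]
        exact Finset.sum_congr rfl fun i _ => by ring
      rw [this, key, ← hsl]
      ring
    have hterm : ∀ i ∈ Finset.univ, x i * (Matrix.mulVec T y i - s * y i) = 0 := by
      apply (Finset.sum_eq_zero_iff_of_nonneg _).mp hsum
      intro i _
      exact mul_nonneg (hx i).le (sub_nonneg.mpr (hTy i))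
    funext i
    have := hterm i (Finset.mem_univ i)
    have h2 : Matrix.mulVec T y i - s * y i = 0 := by
      rcases mul_eq_zero.mp this with h | h
      · exact absurd h (hx i).ne'
      · exact h
    simp [Pi.smul_apply, smul_eq_mul]
    linarith
  · intro hEq
    have : lam * (x ⬝ᵥ y) = s * (x ⬝ᵥ y) := by
      rw [← key, hEq, dotProduct_smul]
      rfl
    have := mul_right_cancel₀ hxy_pos.ne' this
    exact this.symm
end

section
/- Let R(t) be a monic polynomial with integer coefficients having at least one complex root of absolute value strictly greater than 1, let S(t) be a polynomial with integer coefficients, and for each integer n ≥ 1 set Q_n(t) = t^n R(t) + S(t). Then the maximal absolute value λ(Q_n) of the complex roots of Q_n converges to λ(R) as n → ∞, i.e., for every ε > 0 there exists N such that for all n ≥ N, Q_n is a nonconstant polynomial and |λ(Q_n) − λ(R)| < ε. -/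
/-!
For `‖z‖ ≥ σ > 0` one has `P(z) / z ^ deg P = P.reverse (z⁻¹)`. If all roots of `P` lie in the
open disk of radius `σ`, then `P.reverse` has no zero on the closed disk of radius `σ⁻¹`, and the
minimum modulus principle bounds `‖P z‖ / ‖z‖ ^ deg P` on `‖z‖ ≥ σ` from below by its minimum on
the circle `‖z‖ = σ`; this replaces Rouché's theorem.

Applied to `R` with `ρ > max 1 λ(R)`, it shows that `z ^ n R(z)` dominates `S(z)` on `‖z‖ ≥ ρ`
once `n` is large, so `Q_n` has no roots there. Applied to `Q_n` with `max 1 (λ(R) - ε) < σ < λ(R)`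
chosen so that `R` has no zero on `‖z‖ = σ`: on that circle `‖Q_n‖ ≥ c σ ^ n - C` grows without
bound, whereas `Q_n(α) = S(α)` stays fixed at a root `α` of `R` with `‖α‖ = λ(R)`; hence `Q_n`
must have a root of modulus at least `σ`.
-/

open Polynomial

/-- For an integer polynomial `f`, the maximal absolute value of its complex roots. -/
noncomputable def maxRootAbs (f : Polynomial ℤ) : ℝ :=
  sSup ((fun z : ℂ => ‖z‖) '' {z : ℂ | Polynomial.aeval z f = 0})

open Metric Filter

theorem Complex.le_norm_of_forall_mem_frontier_le_norm {E : Type*} [NormedAddCommGroup E]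
    [NormedSpace ℂ E] [Nontrivial E] {f : E → ℂ} {U : Set E}
    (hU : Bornology.IsBounded U) (hd : DiffContOnCl ℂ f U) (hf : ∀ z ∈ closure U, f z ≠ 0)
    {c : ℝ} (hc : ∀ z ∈ frontier U, c ≤ ‖f z‖) {z : E} (hz : z ∈ closure U) : c ≤ ‖f z‖ := by
  rcases le_or_gt c 0 with hc0 | hc0
  · exact hc0.trans (norm_nonneg _)
  have hinv : ‖f⁻¹ z‖ ≤ c⁻¹ := Complex.norm_le_of_forall_mem_frontier_norm_le hU (hd.inv hf)
    (fun w hw => by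
      rw [Pi.inv_apply, norm_inv]
      exact inv_anti₀ hc0 (hc w hw)) hz
  rw [Pi.inv_apply, norm_inv] at hinv
  exact (inv_le_inv₀ (norm_pos_iff.2 (hf z hz)) hc0).1 hinv

theorem Polynomial.eval_eq_eval_reverse_inv_mul_pow {K : Type*} [Field K] (P : K[X]) {z : K}
    (hz : z ≠ 0) :
    P.eval z = P.reverse.eval z⁻¹ * z ^ P.natDegree := by
  let := invertibleOfNonzero hz
  rw [← invOf_eq_inv, eval, eval, eval₂_reverse_mul_pow]

theorem Polynomial.exists_norm_eval_le_mul_pow (P : ℂ[X]) {σ : ℝ} (hσ : 0 < σ) :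
    ∃ C, ∀ z : ℂ, σ ≤ ‖z‖ → ‖P.eval z‖ ≤ C * ‖z‖ ^ P.natDegree := by
  obtain ⟨C, hC⟩ := (isCompact_closedBall (0 : ℂ) σ⁻¹).exists_bound_of_continuousOn
    P.reverse.continuous.continuousOn
  refine ⟨C, fun z hz => ?_⟩
  have hz0 : z ≠ 0 := norm_pos_iff.1 (hσ.trans_le hz)
  rw [P.eval_eq_eval_reverse_inv_mul_pow hz0, norm_mul, norm_pow]
  gcongr
  refine hC _ (mem_closedBall_zero_iff.2 ?_)
  rw [norm_inv]
  exact inv_anti₀ hσ hz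

theorem Polynomial.exists_pos_le_norm_eval (P : ℂ[X]) {K : Set ℂ} (hK : IsCompact K)
    (hP : ∀ w ∈ K, ¬P.IsRoot w) : ∃ c > 0, ∀ w ∈ K, c ≤ ‖P.eval w‖ :=
  hK.exists_forall_le' (P.continuous.norm.continuousOn) fun w hw => norm_pos_iff.2 (hP w hw)

theorem Polynomial.mul_div_pow_le_norm_eval (P : ℂ[X]) {σ c : ℝ} (hσ : 0 < σ)
    (hroots : ∀ z, P.IsRoot z → ‖z‖ < σ) (hc : ∀ w ∈ sphere (0 : ℂ) σ, c ≤ ‖P.eval w‖)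
    {z : ℂ} (hz : σ ≤ ‖z‖) : c * (‖z‖ / σ) ^ P.natDegree ≤ ‖P.eval z‖ := by
  have hP : P ≠ 0 := by
    rintro rfl
    simpa [abs_of_pos hσ] using hroots σ (by simp)
  have hσ' : σ⁻¹ ≠ 0 := inv_ne_zero hσ.ne'
  have hrev : ∀ u ∈ closure (ball (0 : ℂ) σ⁻¹), P.reverse.eval u ≠ 0 := by
    intro u hu hroot
    rw [closure_ball _ hσ', mem_closedBall_zero_iff] at hu
    rcases eq_or_ne u 0 with rfl | hu0
    · rw [← coeff_zero_eq_eval_zero, coeff_zero_reverse] at hroot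
      exact hP (leadingCoeff_eq_zero.1 hroot)
    · have := hroots u⁻¹ (by
        rw [IsRoot, P.eval_eq_eval_reverse_inv_mul_pow (inv_ne_zero hu0), inv_inv, hroot,
          zero_mul])
      rw [norm_inv, inv_lt_comm₀ (norm_pos_iff.2 hu0) hσ] at this
      exact this.not_ge hu
  have hsphere : ∀ u ∈ frontier (ball (0 : ℂ) σ⁻¹), c / σ ^ P.natDegree ≤ ‖P.reverse.eval u‖ := by
    intro u hu
    rw [frontier_ball _ hσ', mem_sphere_zero_iff_norm] at hu
    have hu0 : u ≠ 0 := norm_ne_zero_iff.1 (by rw [hu]; exact hσ')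
    have := hc u⁻¹ (by rw [mem_sphere_zero_iff_norm, norm_inv, hu, inv_inv])
    rw [P.eval_eq_eval_reverse_inv_mul_pow (inv_ne_zero hu0), inv_inv, norm_mul, norm_pow,
      norm_inv, hu, inv_inv] at this
    rwa [div_le_iff₀ (by positivity)]
  have hz0 : z ≠ 0 := norm_pos_iff.1 (hσ.trans_le hz)
  have hmin := Complex.le_norm_of_forall_mem_frontier_le_norm isBounded_ball
    (P.reverse.differentiable.diffContOnCl) hrev hsphere (z := z⁻¹) (by
      rw [closure_ball _ hσ', mem_closedBall_zero_iff, norm_inv]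
      exact inv_anti₀ hσ hz)
  calc c * (‖z‖ / σ) ^ P.natDegree = c / σ ^ P.natDegree * ‖z‖ ^ P.natDegree := by ring
    _ ≤ ‖P.reverse.eval z⁻¹‖ * ‖z‖ ^ P.natDegree := by gcongr
    _ = ‖P.eval z‖ := by rw [P.eval_eq_eval_reverse_inv_mul_pow hz0, norm_mul, norm_pow]

theorem Polynomial.eventually_norm_lt_of_isRoot_X_pow_mul_add (R S : ℂ[X]) {ρ : ℝ} (hρ : 1 < ρ)
    (hR : ∀ z, R.IsRoot z → ‖z‖ < ρ) :
    ∀ᶠ n in atTop, ∀ z, (X ^ n * R + S).IsRoot z → ‖z‖ < ρ := by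
  have hρ0 : 0 < ρ := one_pos.trans hρ
  obtain ⟨c, hc0, hc⟩ := R.exists_pos_le_norm_eval (isCompact_sphere 0 ρ)
    fun w hw hroot => (hR w hroot).ne (mem_sphere_zero_iff_norm.1 hw)
  obtain ⟨C, hC⟩ := S.exists_norm_eval_le_mul_pow hρ0
  have hgrow : Tendsto (fun n => c * ρ ^ (n - S.natDegree)) atTop atTop :=
    ((tendsto_pow_atTop_atTop_of_one_lt hρ).comp (tendsto_sub_atTop_nat _)).const_mul_atTop hc0
  filter_upwards [hgrow.eventually_gt_atTop C, eventually_ge_atTop S.natDegree] with n hn hnS z hz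
  by_contra! hρz
  have hRz := R.mul_div_pow_le_norm_eval hρ0 hR hc hρz
  have hroot : ‖z‖ ^ n * ‖R.eval z‖ = ‖S.eval z‖ := by
    rw [← norm_pow, ← norm_mul, ← norm_neg (S.eval z)]
    congr 1
    simpa [eq_neg_iff_add_eq_zero] using hz
  have : c * ρ ^ (n - S.natDegree) * ‖z‖ ^ S.natDegree ≤ C * ‖z‖ ^ S.natDegree :=
    calc c * ρ ^ (n - S.natDegree) * ‖z‖ ^ S.natDegree
        ≤ c * ‖z‖ ^ (n - S.natDegree) * ‖z‖ ^ S.natDegree := by gcongr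
      _ = ‖z‖ ^ n * c := by rw [mul_assoc, ← pow_add, Nat.sub_add_cancel hnS, mul_comm]
      _ ≤ ‖z‖ ^ n * (c * (‖z‖ / ρ) ^ R.natDegree) := by
          gcongr
          exact le_mul_of_one_le_right hc0.le (one_le_pow₀ ((one_le_div hρ0).2 hρz))
      _ ≤ ‖z‖ ^ n * ‖R.eval z‖ := by gcongr
      _ = ‖S.eval z‖ := hroot
      _ ≤ C * ‖z‖ ^ S.natDegree := hC z hρz
  exact hn.not_ge (le_of_mul_le_mul_right this (pow_pos (hρ0.trans_le hρz) _))

theorem Polynomial.eventually_exists_isRoot_X_pow_mul_add (R S : ℂ[X]) {σ : ℝ} (hσ : 1 < σ)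
    (hR : ∀ w : ℂ, ‖w‖ = σ → ¬R.IsRoot w) {α : ℂ} (hα : R.IsRoot α) (hσα : σ ≤ ‖α‖) :
    ∀ᶠ n in atTop, ∃ z, (X ^ n * R + S).IsRoot z ∧ σ ≤ ‖z‖ := by
  have hσ0 : 0 < σ := one_pos.trans hσ
  have hR0 : R ≠ 0 := by
    rintro rfl
    exact hR σ (by simp [abs_of_pos hσ0]) (by simp)
  obtain ⟨c, hc0, hc⟩ := R.exists_pos_le_norm_eval (isCompact_sphere 0 σ)
    fun w hw => hR w (mem_sphere_zero_iff_norm.1 hw)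
  obtain ⟨C, hC⟩ := (isCompact_sphere (0 : ℂ) σ).exists_bound_of_continuousOn
    S.continuous.continuousOn
  have hgrow : Tendsto (fun n => c * σ ^ n - C) atTop atTop :=
    tendsto_atTop_add_const_right _ _
      ((tendsto_pow_atTop_atTop_of_one_lt hσ).const_mul_atTop hc0)
  filter_upwards [hgrow.eventually_gt_atTop ‖S.eval α‖, eventually_gt_atTop S.natDegree]
    with n hn hnS
  by_contra! hsmall
  have hdeg : (X ^ n * R + S).natDegree = R.natDegree + n := by
    rw [natDegree_add_eq_left_of_natDegree_lt] <;> rw [natDegree_X_pow_mul _ hR0]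
    omega
  have hcirc : ∀ w ∈ sphere (0 : ℂ) σ, c * σ ^ n - C ≤ ‖(X ^ n * R + S).eval w‖ := by
    intro w hw
    have hsub := norm_sub_norm_le (w ^ n * R.eval w) (-S.eval w)
    rw [sub_neg_eq_add, norm_neg, norm_mul, norm_pow, mem_sphere_zero_iff_norm.1 hw] at hsub
    simp only [eval_add, eval_mul, eval_pow, eval_X]
    nlinarith [hc w hw, hC w hw, pow_pos hσ0 n]
  have hαR : (X ^ n * R + S).eval α = S.eval α := by simp [hα.eq_zero]
  have := (X ^ n * R + S).mul_div_pow_le_norm_eval hσ0 hsmall hcirc hσα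
  rw [hdeg, hαR] at this
  refine hn.not_ge ((le_mul_of_one_le_right ?_ ?_).trans this)
  · exact (norm_nonneg _).trans hn.le
  · exact one_le_pow₀ ((one_le_div hσ0).2 hσα)

theorem Polynomial.exists_mem_Ioo_forall_norm_eq_not_isRoot (P : ℂ[X]) (hP : P ≠ 0) {a b : ℝ}
    (hab : a < b) : ∃ σ ∈ Set.Ioo a b, ∀ w : ℂ, ‖w‖ = σ → ¬P.IsRoot w := by
  have hfin : ((‖·‖) '' P.rootSet ℂ).Finite := (P.rootSet_finite ℂ).image _
  obtain ⟨σ, hσ, hσP⟩ := (Set.Ioo_infinite hab).exists_notMem_finite hfin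
  refine ⟨σ, hσ, fun w hw hroot => hσP ⟨w, ?_, hw⟩⟩
  exact mem_rootSet.2 ⟨hP, by simpa using hroot⟩

theorem finite_image_norm_setOf_aeval_eq_zero {f : ℤ[X]} (hf : f ≠ 0) :
    ((fun z : ℂ => ‖z‖) '' {z : ℂ | aeval z f = 0}).Finite := by
  refine ((f.rootSet_finite ℂ).image _).subset (Set.image_mono fun z hz => ?_)
  exact mem_rootSet.2 ⟨hf, hz⟩

theorem norm_le_maxRootAbs {f : ℤ[X]} (hf : f ≠ 0) {z : ℂ} (hz : aeval z f = 0) :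
    ‖z‖ ≤ maxRootAbs f :=
  le_csSup (finite_image_norm_setOf_aeval_eq_zero hf).bddAbove ⟨z, hz, rfl⟩

theorem exists_aeval_eq_zero_norm_eq_maxRootAbs {f : ℤ[X]} (hf : f ≠ 0)
    (h : ∃ z : ℂ, aeval z f = 0) : ∃ z : ℂ, aeval z f = 0 ∧ ‖z‖ = maxRootAbs f :=
  (Set.Nonempty.image (fun z : ℂ => ‖z‖) h).csSup_mem
    (finite_image_norm_setOf_aeval_eq_zero hf)

theorem natDegree_pos_and_maxRootAbs_mem_Ioo {f : ℤ[X]} {a b : ℝ}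
    (hb : ∀ z : ℂ, aeval z f = 0 → ‖z‖ < b) (ha : ∃ z : ℂ, aeval z f = 0 ∧ a < ‖z‖) :
    0 < f.natDegree ∧ maxRootAbs f ∈ Set.Ioo a b := by
  obtain ⟨z, hz, haz⟩ := ha
  have hf : f ≠ 0 := by
    rintro rfl
    have := hb b (by simp)
    rw [Complex.norm_real, Real.norm_eq_abs] at this
    exact (le_abs_self b).not_gt this
  obtain ⟨z', hz', hz'max⟩ := exists_aeval_eq_zero_norm_eq_maxRootAbs hf ⟨z, hz⟩
  exact ⟨natDegree_pos_of_aeval_root hf hz fun x hx => by simpa using hx,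
    haz.trans_le (norm_le_maxRootAbs hf hz), hz'max ▸ hb z' hz'⟩

/-- If `R` is monic with a root outside the unit circle and `Q_n = t^n R + S`, then
`λ(Q_n) → λ(R)` as `n → ∞`. -/
theorem maxRootAbs_tendsto (R S : Polynomial ℤ) (hR : R.Monic)
    (hroot : ∃ θ : ℂ, Polynomial.aeval θ R = 0 ∧ 1 < ‖θ‖) :
    ∀ ε : ℝ, 0 < ε → ∃ N : ℕ, 1 ≤ N ∧ ∀ n : ℕ, N ≤ n →
      0 < (X ^ n * R + S).natDegree ∧
      |maxRootAbs (X ^ n * R + S) - maxRootAbs R| < ε := by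
  intro ε hε
  obtain ⟨θ, hθ, hθ1⟩ := hroot
  set Rc := R.map (algebraMap ℤ ℂ)
  set Sc := S.map (algebraMap ℤ ℂ)
  have isRoot_map (f : ℤ[X]) (z : ℂ) : (f.map (algebraMap ℤ ℂ)).IsRoot z ↔ aeval z f = 0 := by
    rw [IsRoot, eval_map_algebraMap]
  have map_Q (n : ℕ) : (X ^ n * R + S).map (algebraMap ℤ ℂ) = X ^ n * Rc + Sc := by simp [Rc, Sc]
  obtain ⟨α, hα, hαlam⟩ := exists_aeval_eq_zero_norm_eq_maxRootAbs hR.ne_zero ⟨θ, hθ⟩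
  have hlam1 : 1 < maxRootAbs R := hθ1.trans_le (norm_le_maxRootAbs hR.ne_zero hθ)
  obtain ⟨σ, ⟨hσlow, hσlam⟩, hσ⟩ := Rc.exists_mem_Ioo_forall_norm_eq_not_isRoot
    (hR.map _).ne_zero (max_lt hlam1 (sub_lt_self _ hε))
  have hupper := Rc.eventually_norm_lt_of_isRoot_X_pow_mul_add Sc
    (by linarith : 1 < maxRootAbs R + ε) fun z hz =>
      (norm_le_maxRootAbs hR.ne_zero ((isRoot_map R z).1 hz)).trans_lt (lt_add_of_pos_right _ hε)
  have hlower := Rc.eventually_exists_isRoot_X_pow_mul_add Sc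
    ((le_max_left _ _).trans_lt hσlow) hσ ((isRoot_map R α).2 hα) (hαlam ▸ hσlam.le)
  obtain ⟨N, hN⟩ := eventually_atTop.1 (hupper.and hlower)
  refine ⟨N + 1, le_add_self, fun n hn => ?_⟩
  obtain ⟨hQupper, hQlower⟩ := hN n (by omega)
  simp only [← map_Q, isRoot_map] at hQupper hQlower
  obtain ⟨hdeg, hgt, hlt⟩ := natDegree_pos_and_maxRootAbs_mem_Ioo hQupper
    (hQlower.imp fun z hz => ⟨hz.1, (le_max_right _ _).trans_lt (hσlow.trans_le hz.2)⟩)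
  exact ⟨hdeg, abs_lt.2 ⟨by linarith, by linarith⟩⟩
end

section
/- Let R(t) be a monic polynomial with integer coefficients, let S(t) be a polynomial with integer coefficients, and for each integer n ≥ 1 set Q_n(t) = t^n R(t) + S(t). Let θ be a complex root of R with |θ| > 1, of multiplicity m, and let δ > 0 be small enough that the closed disk of radius δ centered at θ lies strictly outside the closed unit disk and contains no root of R other than θ. Then there exists an integer N such that for every n ≥ N, the number of complex roots of Q_n, counted with multiplicity, lying in the open disk of radius δ centered at θ is exactly m. -/
/-!
On the circle `‖z - θ‖ = δ` we have `|z| ≥ ρ > 1` and `|R(z)| ≥ η > 0`, so for large `n`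
`|Q_n(z) - z^n R(z)| = |S(z)| < ρ^n η ≤ |z^n R(z)|`. By Rouché's theorem `Q_n` and `t^n R(t)`
then have the same number of roots in the disk, and the roots of `t^n R(t)` there are `θ`,
with multiplicity `m`, since `0` lies outside the disk. Rouché's theorem for polynomials
follows from the argument principle `∮ p'/p = 2πi · #{roots inside}`.
-/

open Polynomial Metric Complex Filter Real

theorem Polynomial.Splits.eval_derivative_div_eval {K : Type*} [Field K] {p : K[X]}
    (hp : p.Splits) {x : K} (hx : p.eval x ≠ 0) :
    p.derivative.eval x / p.eval x = (p.roots.map fun a => (x - a)⁻¹).sum := by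
  classical
  rw [hp.eval_eq_prod_roots] at hx ⊢
  rw [hp.eval_derivative, mul_div_mul_left _ _ (left_ne_zero_of_mul hx), ← Multiset.sum_map_div]
  refine congrArg Multiset.sum (Multiset.map_congr rfl fun a ha => ?_)
  rw [← Multiset.prod_map_erase ha] at hx ⊢
  rw [div_mul_cancel_right₀ (right_ne_zero_of_mul (right_ne_zero_of_mul hx))]

theorem circleIntegral.integral_sub_inv_of_lt_norm {c a : ℂ} {r : ℝ} (hr : 0 ≤ r)
    (ha : r < ‖a - c‖) : (∮ z in C(c, r), (z - a)⁻¹) = 0 := by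
  have hne : ∀ z ∈ closedBall c r, z - a ≠ 0 := fun z hz h => by
    rw [sub_eq_zero.1 h, mem_closedBall_iff_norm] at hz
    exact hz.not_gt ha
  exact circleIntegral_eq_zero_of_differentiable_on_off_countable hr Set.countable_empty
    ((continuousOn_id.sub continuousOn_const).inv₀ hne)
    fun z hz => (differentiableAt_id.sub_const a).inv (hne z (ball_subset_closedBall hz.1))

theorem circleIntegral.integral_multiset_sum_sub_inv {c : ℂ} {r : ℝ} (hr : 0 < r)
    (s : Multiset ℂ) (hs : ∀ a ∈ s, ‖a - c‖ ≠ r) :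
    (∮ z in C(c, r), (s.map fun a => (z - a)⁻¹).sum) =
      2 * π * I * (s.filter fun a => ‖a - c‖ < r).card := by
  induction s using Multiset.induction_on with
  | empty => simp [circleIntegral]
  | cons a s ih =>
    have ha : ‖a - c‖ ≠ r := hs a (Multiset.mem_cons_self a s)
    have hs' : ∀ b ∈ s, ‖b - c‖ ≠ r := fun b hb => hs b (Multiset.mem_cons_of_mem hb)
    have hsub : ∀ b, ‖b - c‖ ≠ r → ContinuousOn (fun z => (z - b)⁻¹) (sphere c r) :=
      fun b hb => (continuous_sub_right b).continuousOn.inv₀ fun z hz h => hb <| by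
        rwa [← sub_eq_zero.1 h, ← mem_sphere_iff_norm]
    have hsum : ContinuousOn (fun z => (s.map fun b => (z - b)⁻¹).sum) (sphere c r) :=
      continuousOn_multiset_sum s fun b hb => hsub b (hs' b hb)
    simp only [Multiset.map_cons, Multiset.sum_cons]
    rw [circleIntegral.integral_add ((hsub a ha).circleIntegrable hr.le)
      (hsum.circleIntegrable hr.le), ih hs', Multiset.filter_cons]
    rcases ha.lt_or_gt with ha | ha
    · rw [circleIntegral.integral_sub_inv_of_mem_ball (mem_ball_iff_norm.2 ha), if_pos ha,
        Multiset.card_add, Multiset.card_singleton]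
      push_cast
      ring
    · rw [circleIntegral.integral_sub_inv_of_lt_norm hr.le ha, if_neg ha.not_gt]
      simp

theorem Polynomial.circleIntegral_eval_derivative_div_eval {p : ℂ[X]} {c : ℂ} {r : ℝ}
    (hr : 0 < r) (hp : ∀ z ∈ sphere c r, p.eval z ≠ 0) :
    (∮ z in C(c, r), p.derivative.eval z / p.eval z) =
      2 * π * I * (p.roots.filter fun a => ‖a - c‖ < r).card := by
  rw [circleIntegral.integral_congr hr.le
    fun z hz => (IsAlgClosed.splits p).eval_derivative_div_eval (hp z hz)]
  exact circleIntegral.integral_multiset_sum_sub_inv hr _ fun a ha har =>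
    hp a (mem_sphere_iff_norm.2 har) (isRoot_of_mem_roots ha)

theorem Polynomial.card_roots_filter_eq_of_norm_sub_lt {f g : ℂ[X]} {c : ℂ} {r : ℝ}
    (hr : 0 < r) (h : ∀ z ∈ sphere c r, ‖g.eval z - f.eval z‖ < ‖f.eval z‖) :
    (g.roots.filter fun a => ‖a - c‖ < r).card =
      (f.roots.filter fun a => ‖a - c‖ < r).card := by
  have hf : ∀ z ∈ sphere c r, f.eval z ≠ 0 := fun z hz h0 =>
    (norm_nonneg _).not_gt (by simpa [h0] using h z hz)
  have hg : ∀ z ∈ sphere c r, g.eval z ≠ 0 := fun z hz h0 => by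
    simpa [h0] using h z hz
  -- On the circle `g / f` lies in the disk `‖w - 1‖ < 1`, where `log` is holomorphic, so
  -- `log (g / f)` is a primitive of `g'/g - f'/f` there.
  have hprim : ∀ z ∈ sphere c r, HasDerivAt (fun w => log (g.eval w / f.eval w))
      (g.derivative.eval z / g.eval z - f.derivative.eval z / f.eval z) z := by
    intro z hz
    have hslit : g.eval z / f.eval z ∈ slitPlane := by
      have := mem_slitPlane_of_norm_lt_one (z := (g.eval z - f.eval z) / f.eval z)
        (by rw [norm_div, div_lt_one (norm_pos_iff.2 (hf z hz))]; exact h z hz)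
      rwa [sub_div, div_self (hf z hz), add_sub_cancel] at this
    refine (((g.hasDerivAt z).div (f.hasDerivAt z) (hf z hz)).clog hslit).congr_deriv ?_
    simp only [Pi.div_apply]
    field_simp [hf z hz, hg z hz]
  have hcont : ∀ p : ℂ[X], (∀ z ∈ sphere c r, p.eval z ≠ 0) →
      CircleIntegrable (fun z => p.derivative.eval z / p.eval z) c r := fun p hp =>
    (p.derivative.continuous.continuousOn.div p.continuous.continuousOn hp).circleIntegrable hr.le
  have hzero := circleIntegral.integral_eq_zero_of_hasDerivWithinAt hr.le
    fun z hz => (hprim z hz).hasDerivWithinAt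
  rw [circleIntegral.integral_sub (hcont g hg) (hcont f hf),
    circleIntegral_eval_derivative_div_eval hr hg, circleIntegral_eval_derivative_div_eval hr hf,
    ← mul_sub, mul_eq_zero, sub_eq_zero] at hzero
  exact_mod_cast hzero.resolve_left (by simp [pi_ne_zero])

theorem IsCompact.eventually_forall_norm_lt_norm_pow_mul {𝕜 E : Type*} [NormedField 𝕜]
    [SeminormedAddCommGroup E] {K : Set 𝕜} (hK : IsCompact K) {F : 𝕜 → E} {G : 𝕜 → 𝕜}
    (hF : ContinuousOn F K) (hG : ContinuousOn G K) (hK1 : ∀ z ∈ K, 1 < ‖z‖)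
    (hG0 : ∀ z ∈ K, G z ≠ 0) :
    ∀ᶠ n : ℕ in atTop, ∀ z ∈ K, ‖F z‖ < ‖z ^ n * G z‖ := by
  obtain ⟨ρ, hρ, hρK⟩ := hK.exists_forall_le' continuous_norm.continuousOn hK1
  obtain ⟨η, hη, hηK⟩ := hK.exists_forall_le' (continuous_norm.comp_continuousOn hG)
    fun z hz => norm_pos_iff.2 (hG0 z hz)
  obtain ⟨A, hA⟩ := hK.exists_bound_of_continuousOn hF
  have hgrow := (tendsto_pow_atTop_atTop_of_one_lt hρ).atTop_mul_const hη
  filter_upwards [hgrow.eventually_gt_atTop A] with n hn z hz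
  calc ‖F z‖ ≤ A := hA z hz
    _ < ρ ^ n * η := hn
    _ ≤ ‖z ^ n * G z‖ := by
      rw [norm_mul, norm_pow]
      gcongr
      exacts [hρK z hz, hηK z hz]

theorem Polynomial.card_roots_X_pow_mul_filter_eq_rootMultiplicity {K : Type*} [Field K]
    (n : ℕ) (p : K[X]) (P : K → Prop) [DecidablePred P] {θ : K} (hθ : P θ) (h0 : ¬P 0)
    (honly : ∀ z, p.IsRoot z → P z → z = θ) :
    ((X ^ n * p).roots.filter P).card = p.rootMultiplicity θ := by
  classical
  rcases eq_or_ne p 0 with rfl | hp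
  · simp
  have hroots : (p.roots.filter P) = p.roots.filter (· = θ) :=
    Multiset.filter_congr fun z hz => ⟨honly z (isRoot_of_mem_roots hz), fun h => h ▸ hθ⟩
  rw [roots_mul (mul_ne_zero (pow_ne_zero n X_ne_zero) hp), roots_X_pow, Multiset.filter_add,
    Multiset.filter_eq_nil.2 fun z hz => by
      rwa [Multiset.mem_singleton.1 (Multiset.mem_nsmul.1 hz).2], zero_add, hroots]
  convert (congrArg Multiset.card (Multiset.filter_eq' p.roots θ)).trans
    ((Multiset.card_replicate _ _).trans (count_roots p))

theorem roots_in_disk_eventually_general (R S : Polynomial ℤ) (θ : ℂ)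
    (m : ℕ) (hm : ((R.map (Int.castRingHom ℂ)).rootMultiplicity θ) = m)
    (δ : ℝ) (hδ : 0 < δ)
    (houtside : ∀ z : ℂ, ‖z - θ‖ ≤ δ → 1 < ‖z‖)
    (honly : ∀ z : ℂ, Polynomial.aeval z R = 0 → ‖z - θ‖ ≤ δ → z = θ) :
    ∃ N : ℕ, ∀ n : ℕ, N ≤ n →
      (((X ^ n * R + S).map (Int.castRingHom ℂ)).roots.filter
        (fun z => ‖z - θ‖ < δ)).card = m := by
  set Rc := R.map (Int.castRingHom ℂ)
  set Sc := S.map (Int.castRingHom ℂ)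
  have hRc_only : ∀ z, Rc.IsRoot z → ‖z - θ‖ ≤ δ → z = θ := fun z hz =>
    honly z (by rwa [aeval_def, eval₂_eq_eval_map, algebraMap_int_eq])
  have hRc_ne : ∀ z ∈ sphere θ δ, Rc.eval z ≠ 0 := fun z hz h0 => by
    have hzθ := mem_sphere_iff_norm.1 hz
    rw [hRc_only z h0 hzθ.le, sub_self, norm_zero] at hzθ
    exact hδ.ne hzθ
  obtain ⟨N, hN⟩ := eventually_atTop.1 <|
    (isCompact_sphere θ δ).eventually_forall_norm_lt_norm_pow_mul Sc.continuous.continuousOn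
      Rc.continuous.continuousOn (fun z hz => houtside z (mem_sphere_iff_norm.1 hz).le) hRc_ne
  refine ⟨N, fun n hn => ?_⟩
  have hQ : (X ^ n * R + S).map (Int.castRingHom ℂ) = X ^ n * Rc + Sc := by
    simp [Rc, Sc]
  rw [← hm, hQ, card_roots_filter_eq_of_norm_sub_lt hδ (f := X ^ n * Rc) fun z hz => by
      simpa using hN n hn z hz]
  exact card_roots_X_pow_mul_filter_eq_rootMultiplicity n Rc _ (by simpa using hδ)
    (fun h0 => (houtside 0 h0.le).not_gt (by simp)) fun z hz hzθ => hRc_only z hz hzθ.le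

/-- Lemma 2.5: let `θ` be a root of the monic integer polynomial `R` with `|θ| > 1`,
of multiplicity `m`, and let `δ > 0` be small enough that the closed disk of radius `δ`
about `θ` lies strictly outside the closed unit disk and contains no other root of `R`.
Then for all sufficiently large `n`, the polynomial `Q_n = t^n R + S` has exactly `m`
roots (with multiplicity) in the open disk of radius `δ` about `θ`. -/
theorem roots_in_disk_eventually (R S : Polynomial ℤ) (hR : R.Monic)
    (θ : ℂ) (hθroot : Polynomial.aeval θ R = 0) (hθabs : 1 < ‖θ‖)
    (m : ℕ) (hm : ((R.map (Int.castRingHom ℂ)).rootMultiplicity θ) = m)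
    (δ : ℝ) (hδ : 0 < δ)
    (houtside : ∀ z : ℂ, ‖z - θ‖ ≤ δ → 1 < ‖z‖)
    (honly : ∀ z : ℂ, Polynomial.aeval z R = 0 → ‖z - θ‖ ≤ δ → z = θ) :
    ∃ N : ℕ, ∀ n : ℕ, N ≤ n →
      (((X ^ n * R + S).map (Int.castRingHom ℂ)).roots.filter
        (fun z => ‖z - θ‖ < δ)).card = m :=
  roots_in_disk_eventually_general R S θ m hm δ hδ houtside honly
end

section
/- Let R(t) be a monic polynomial with integer coefficients all of whose complex roots have absolute value at most 1, let S(t) be a polynomial with integer coefficients, and for each integer n ≥ 1 set Q_n(t) = t^n R(t) + S(t). Then for every ε > 0 there exists an integer N such that for all n ≥ N, every complex root z of Q_n satisfies |z| ≤ 1 + ε. In particular, if for each sufficiently large n the polynomial Q_n has a real root μ_n > 1, then μ_n → 1 as n → ∞. -/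
/-!
Instead of Rouché's theorem, compare sizes directly. If `‖z‖ ≥ 1`, factoring `P` over its roots
gives `‖P(z)‖ ≥ ‖lc P‖ (‖z‖ - 1) ^ deg P`, while `‖T(z)‖ ≤ C ‖z‖ ^ deg T`. At a root `z` of
`X ^ n P + T` with `‖z‖ > 1 + ε` we have `‖z‖ ^ n ‖P(z)‖ = ‖T(z)‖`, hence
`(1 + ε) ^ (n - deg T) ‖lc P‖ ε ^ deg P ≤ C`, which fails once `n` is large.
-/

open Polynomial Filter

namespace Polynomial

theorem norm_eval_le_sum_norm_coeff_mul_pow_natDegree {K : Type*} [NormedRing K] [NormOneClass K]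
    (p : K[X]) {z : K} (hz : 1 ≤ ‖z‖) :
    ‖p.eval z‖ ≤ (∑ i ∈ Finset.range (p.natDegree + 1), ‖p.coeff i‖) * ‖z‖ ^ p.natDegree := by
  rw [eval_eq_sum_range, Finset.sum_mul]
  refine (norm_sum_le _ _).trans (Finset.sum_le_sum fun i hi => ?_)
  calc ‖p.coeff i * z ^ i‖ ≤ ‖p.coeff i‖ * ‖z‖ ^ i := norm_mul_le_of_le le_rfl (norm_pow_le _ _)
    _ ≤ ‖p.coeff i‖ * ‖z‖ ^ p.natDegree := by
      gcongr
      exact Finset.mem_range_succ_iff.mp hi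

variable {K : Type*} [NormedField K]

theorem norm_leadingCoeff_mul_sub_pow_natDegree_le_norm_eval {p : K[X]} (hp : p.Splits)
    {r : ℝ} (hroots : ∀ a ∈ p.roots, ‖a‖ ≤ r) {z : K} (hz : r ≤ ‖z‖) :
    ‖p.leadingCoeff‖ * (‖z‖ - r) ^ p.natDegree ≤ ‖p.eval z‖ := by
  have hprod : (‖z‖ - r) ^ p.natDegree ≤ (p.roots.map fun a => ‖z - a‖).prod := by
    rw [hp.natDegree_eq_card_roots, ← Multiset.prod_replicate, ← Multiset.map_const']
    exact Multiset.prod_map_le_prod_map₀ _ _ (fun _ _ => sub_nonneg.2 hz)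
      fun a ha => (sub_le_sub_left (hroots a ha) _).trans (norm_sub_norm_le z a)
  rw [hp.eval_eq_prod_roots, norm_mul, ← normHom_apply (p.roots.map _).prod, map_multiset_prod,
    Multiset.map_map]
  exact mul_le_mul_of_nonneg_left hprod (norm_nonneg _)

theorem eventually_norm_le_of_eval_X_pow_mul_add_eq_zero {P : K[X]} (hP : P ≠ 0)
    (hsplit : P.Splits) (hroots : ∀ a ∈ P.roots, ‖a‖ ≤ 1) (T : K[X]) {ε : ℝ} (hε : 0 < ε) :
    ∀ᶠ n in atTop, ∀ z : K, (X ^ n * P + T).eval z = 0 → ‖z‖ ≤ 1 + ε := by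
  set m := T.natDegree
  set C := ∑ i ∈ Finset.range (m + 1), ‖T.coeff i‖
  have hc : 0 < ‖P.leadingCoeff‖ * ε ^ P.natDegree := by
    have := leadingCoeff_ne_zero.2 hP
    positivity
  have bound : ∀ n, m ≤ n → ∀ z : K, (X ^ n * P + T).eval z = 0 → 1 + ε < ‖z‖ →
      (1 + ε) ^ (n - m) * (‖P.leadingCoeff‖ * ε ^ P.natDegree) ≤ C := by
    intro n hmn z hz hlt
    have hnorm : ‖z‖ ^ n * ‖P.eval z‖ = ‖T.eval z‖ := by
      rw [eval_add, eval_mul, eval_pow, eval_X, add_eq_zero_iff_eq_neg] at hz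
      rw [← norm_pow, ← norm_mul, hz, norm_neg]
    refine le_of_mul_le_mul_left ?_ (pow_pos (by linarith) m : 0 < ‖z‖ ^ m)
    calc ‖z‖ ^ m * ((1 + ε) ^ (n - m) * (‖P.leadingCoeff‖ * ε ^ P.natDegree))
        ≤ ‖z‖ ^ m * (‖z‖ ^ (n - m) * (‖P.leadingCoeff‖ * (‖z‖ - 1) ^ P.natDegree)) := by
          gcongr; linarith
      _ = ‖z‖ ^ n * (‖P.leadingCoeff‖ * (‖z‖ - 1) ^ P.natDegree) := by
          rw [← mul_assoc, ← pow_add, Nat.add_sub_cancel' hmn]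
      _ ≤ ‖z‖ ^ n * ‖P.eval z‖ := by
          gcongr
          exact norm_leadingCoeff_mul_sub_pow_natDegree_le_norm_eval hsplit hroots (by linarith)
      _ = ‖T.eval z‖ := hnorm
      _ ≤ C * ‖z‖ ^ m := T.norm_eval_le_sum_norm_coeff_mul_pow_natDegree (by linarith)
      _ = ‖z‖ ^ m * C := mul_comm _ _
  have grow : Tendsto (fun n => (1 + ε) ^ (n - m) * (‖P.leadingCoeff‖ * ε ^ P.natDegree))
      atTop atTop :=
    ((tendsto_pow_atTop_atTop_of_one_lt (by linarith)).comp
      (tendsto_sub_atTop_nat m)).atTop_mul_const hc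
  filter_upwards [eventually_ge_atTop m, grow.eventually_gt_atTop C] with n hmn hC z hz
  exact not_lt.1 fun hlt => (bound n hmn z hz hlt).not_gt hC

end Polynomial

/-- Lemma 2.6: if all complex roots of the monic integer polynomial `R` lie in the
closed unit disk and `Q_n = t^n R + S`, then for every `ε > 0` all roots of `Q_n` have
absolute value at most `1 + ε` for `n` large; in particular any real roots `μ_n > 1`
of `Q_n` (for `n` sufficiently large) converge to `1`. -/
theorem roots_small_tendsto_one (R S : Polynomial ℤ) (hR : R.Monic)
    (hsmall : ∀ z : ℂ, Polynomial.aeval z R = 0 → ‖z‖ ≤ 1) :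
    (∀ ε : ℝ, 0 < ε → ∃ N : ℕ, ∀ n : ℕ, N ≤ n →
      ∀ z : ℂ, Polynomial.aeval z (X ^ n * R + S) = 0 → ‖z‖ ≤ 1 + ε) ∧
    (∀ μ : ℕ → ℝ,
      (∃ N₀ : ℕ, ∀ n : ℕ, N₀ ≤ n →
        1 < μ n ∧ Polynomial.aeval (μ n) (X ^ n * R + S) = 0) →
      Tendsto μ atTop (nhds 1)) := by
  set P : ℂ[X] := R.map (algebraMap ℤ ℂ)
  have hroots : ∀ a ∈ P.roots, ‖a‖ ≤ 1 := fun a ha =>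
    hsmall a (by rw [← eval_map_algebraMap]; exact (mem_roots'.1 ha).2)
  have hbound : ∀ ε : ℝ, 0 < ε → ∀ᶠ n in atTop,
      ∀ z : ℂ, aeval z (X ^ n * R + S) = 0 → ‖z‖ ≤ 1 + ε := by
    intro ε hε
    filter_upwards [eventually_norm_le_of_eval_X_pow_mul_add_eq_zero (hR.map _).ne_zero
      (IsAlgClosed.splits P) hroots (S.map (algebraMap ℤ ℂ)) hε] with n hn z hz
    rw [← eval_map_algebraMap, Polynomial.map_add, Polynomial.map_mul, Polynomial.map_pow,
      Polynomial.map_X] at hz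
    exact hn z hz
  refine ⟨fun ε hε => (hbound ε hε).exists_forall_of_atTop, fun μ ⟨N₀, hμ⟩ => ?_⟩
  refine tendsto_order.2 ⟨fun a ha => ?_, fun a ha => ?_⟩
  · filter_upwards [eventually_ge_atTop N₀] with n hn
    exact ha.trans (hμ n hn).1
  · filter_upwards [eventually_ge_atTop N₀, hbound ((a - 1) / 2) (by linarith)] with n hn hb
    have hroot : aeval (μ n : ℂ) (X ^ n * R + S) = 0 := by
      rw [← Complex.coe_algebraMap, aeval_algebraMap_apply, (hμ n hn).2, map_zero]
    have hμa := hb _ hroot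
    rw [Complex.norm_real, Real.norm_of_nonneg (by linarith [(hμ n hn).1])] at hμa
    linarith
end

section
/- Let K be a commutative ring, let ℓ ≥ 0 and n ≥ 1 be integers, let A be an (ℓ+1)×(ℓ+1) matrix over K, and let c ∈ K. Define the (ℓ+n+1)×(ℓ+n+1) matrix M over K by: M_{i,j} = A_{i,j} for 1 ≤ i, j ≤ ℓ+1; M_{ℓ+i, ℓ+i+1} = 1 for 1 ≤ i ≤ n; M_{ℓ+n+1, j} = A_{ℓ+1, j} for 1 ≤ j ≤ ℓ; M_{ℓ+n+1, ℓ+1} = c; and all other entries equal 0. Then the characteristic polynomials satisfy det(t·I − M) = t^n · det(t·I − A) + S(t), where S(t) = det(B(t)) and B(t) is the (ℓ+1)×(ℓ+1) matrix over K[t] whose rows 1 through ℓ agree with those of t·I − A and whose row ℓ+1 is (−A_{ℓ+1,1}, …, −A_{ℓ+1,ℓ}, −c). -/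
open Polynomial

/-- The `(ℓ+n+1)×(ℓ+n+1)` matrix built from an `(ℓ+1)×(ℓ+1)` matrix `A` and a scalar
`c` (indices here are 0-based; the statement's 1-based indices are shifted by one):
the upper-left `(ℓ+1)×(ℓ+1)` block is `A`; the entries `M_{ℓ+i-1, ℓ+i}` (0-based) equal
`1` for `1 ≤ i ≤ n`; the last row is `(A_{ℓ,0}, …, A_{ℓ,ℓ-1}, c, 0, …, 0)`; all other
entries vanish. -/
def combMatrix {K : Type*} [CommRing K] (ℓ n : ℕ)
    (A : Matrix (Fin (ℓ + 1)) (Fin (ℓ + 1)) K) (c : K) :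
    Matrix (Fin (ℓ + n + 1)) (Fin (ℓ + n + 1)) K := fun i j =>
  if hi : (i : ℕ) < ℓ + 1 then
    if hj : (j : ℕ) < ℓ + 1 then A ⟨i, hi⟩ ⟨j, hj⟩
    else if (j : ℕ) = (i : ℕ) + 1 then 1 else 0
  else if (i : ℕ) < ℓ + n then
    (if (j : ℕ) = (i : ℕ) + 1 then 1 else 0)
  else
    if hj : (j : ℕ) < ℓ then A ⟨ℓ, Nat.lt_succ_self ℓ⟩ ⟨j, by omega⟩
    else if (j : ℕ) = ℓ then c else 0

/-- The `(ℓ+1)×(ℓ+1)` matrix over `K[t]` whose first `ℓ` rows agree with those of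
`t·I − A` and whose last row is `(−A_{ℓ,0}, …, −A_{ℓ,ℓ-1}, −c)` (0-based indices). -/
noncomputable def recessiveMatrix {K : Type*} [CommRing K] (ℓ : ℕ)
    (A : Matrix (Fin (ℓ + 1)) (Fin (ℓ + 1)) K) (c : K) :
    Matrix (Fin (ℓ + 1)) (Fin (ℓ + 1)) (Polynomial K) := fun i j =>
  if (i : ℕ) < ℓ then Matrix.charmatrix A i j
  else if (j : ℕ) < ℓ then - Polynomial.C (A ⟨ℓ, Nat.lt_succ_self ℓ⟩ j)
  else - Polynomial.C c

/-!
Write `t·I − M` as the block matrix `[[t − A, −E], [0, t − N]]` (`N` the nilpotent shift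
coming from the chain of `n` rows, `E` the entry `1` linking row `ℓ` to that chain) with its
last row replaced by `t·e_last + r`, where `r` is `−(A_{ℓ,0}, …, A_{ℓ,ℓ-1}, c)` padded by zeros.
The determinant is linear in that row. With last row `t·e_last` the matrix is block
triangular, with determinant `t^n · det(t − A)`. With last row `r`, the last column has a
single entry `−1`, just above the last row; expanding along it shortens the chain by one
without changing the determinant, so after `n` steps one is left with `B(t)`.
-/

namespace Matrix

variable {R : Type*} [CommRing R] {n : ℕ}

theorem det_succ_row_of_forall_ne (A : Matrix (Fin n.succ) (Fin n.succ) R) (i j : Fin n.succ)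
    (h : ∀ k ≠ j, A i k = 0) :
    A.det = (-1) ^ (i + j : ℕ) * A i j * (A.submatrix i.succAbove j.succAbove).det := by
  rw [det_succ_row A i, Fintype.sum_eq_single j fun k hk => by rw [h k hk, mul_zero, zero_mul]]

theorem det_succ_column_of_forall_ne (A : Matrix (Fin n.succ) (Fin n.succ) R) (i j : Fin n.succ)
    (h : ∀ k ≠ i, A k j = 0) :
    A.det = (-1) ^ (i + j : ℕ) * A i j * (A.submatrix i.succAbove j.succAbove).det := by
  rw [det_succ_column A j, Fintype.sum_eq_single i fun k hk => by rw [h k hk, mul_zero, zero_mul]]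

end Matrix

open Matrix

section ChainExtension

variable {R : Type*} [CommRing R] {ℓ : ℕ}

/-- The block matrix `[[B, -E], [0, x - N]]` with `N` the nilpotent shift of size `m`
and `E` the matrix unit linking the last row of `B` to the first new column. -/
def chainExtension (B : Matrix (Fin (ℓ + 1)) (Fin (ℓ + 1)) R) (x : R) (m : ℕ) :
    Matrix (Fin (ℓ + m + 1)) (Fin (ℓ + m + 1)) R := fun i j =>
  if hi : (i : ℕ) < ℓ + 1 then
    if hj : (j : ℕ) < ℓ + 1 then B ⟨i, hi⟩ ⟨j, hj⟩
    else if (j : ℕ) = i + 1 then -1 else 0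
  else if (j : ℕ) = i then x
  else if (j : ℕ) = i + 1 then -1 else 0

def padZero (w : Fin (ℓ + 1) → R) (m : ℕ) : Fin (ℓ + m + 1) → R := fun j =>
  if h : (j : ℕ) < ℓ + 1 then w ⟨j, h⟩ else 0

variable (B : Matrix (Fin (ℓ + 1)) (Fin (ℓ + 1)) R) (x : R)

theorem chainExtension_zero : chainExtension B x 0 = B := by
  ext i j
  simp [chainExtension, i.isLt, j.isLt]

theorem padZero_zero (w : Fin (ℓ + 1) → R) : padZero w 0 = w := by
  ext j
  simp [padZero, j.isLt]

theorem submatrix_chainExtension_succ (m : ℕ) :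
    (chainExtension B x (m + 1)).submatrix Fin.castSucc Fin.castSucc = chainExtension B x m :=
  rfl

theorem det_chainExtension (m : ℕ) : (chainExtension B x m).det = x ^ m * B.det := by
  induction m with
  | zero => rw [chainExtension_zero, pow_zero, one_mul]
  | succ m ih =>
    have hdiag : chainExtension B x (m + 1) (Fin.last _) (Fin.last _) = x := by
      simp only [chainExtension, Fin.val_last]
      split_ifs <;> first | rfl | omega
    have hrow : ∀ j ≠ Fin.last _, chainExtension B x (m + 1) (Fin.last _) j = 0 := by
      intro j hj
      rw [Ne, Fin.ext_iff, Fin.val_last] at hj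
      simp only [chainExtension, Fin.val_last]
      split_ifs <;> first | rfl | omega
    rw [det_succ_row_of_forall_ne _ _ _ hrow, hdiag, Fin.succAbove_last,
      submatrix_chainExtension_succ, ih, Even.neg_one_pow ⟨_, rfl⟩, pow_succ]
    ring

theorem det_updateRow_chainExtension_padZero (w : Fin (ℓ + 1) → R) (m : ℕ) :
    ((chainExtension B x m).updateRow (Fin.last _) (padZero w m)).det
      = (B.updateRow (Fin.last ℓ) w).det := by
  induction m with
  | zero => rw [chainExtension_zero, padZero_zero]; rfl
  | succ m ih =>
    set M := (chainExtension B x (m + 1)).updateRow (Fin.last _) (padZero w (m + 1))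
    have hcol : ∀ i ≠ (Fin.last (ℓ + m)).castSucc, M i (Fin.last _) = 0 := by
      intro i hi
      rw [Ne, Fin.ext_iff, Fin.val_castSucc, Fin.val_last] at hi
      simp only [M, updateRow_apply, chainExtension, padZero, Fin.ext_iff, Fin.val_last]
      split_ifs <;> first | rfl | omega
    have hentry : M (Fin.last (ℓ + m)).castSucc (Fin.last _) = -1 := by
      simp only [M, updateRow_apply, chainExtension, padZero, Fin.ext_iff, Fin.val_last,
        Fin.val_castSucc]
      split_ifs <;> first | rfl | omega
    have hminor : M.submatrix (Fin.last (ℓ + m)).castSucc.succAbove (Fin.last _).succAbove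
        = (chainExtension B x m).updateRow (Fin.last _) (padZero w m) := by
      ext i j
      rw [submatrix_apply, Fin.succAbove_last]
      rcases lt_or_ge (i : ℕ) (ℓ + m) with hi | hi
      · rw [Fin.succAbove_of_castSucc_lt _ _ (by simp [Fin.lt_def]; omega)]
        simp only [M, updateRow_apply, chainExtension, padZero, Fin.ext_iff, Fin.val_last,
          Fin.val_castSucc]
        split_ifs <;> first | rfl | omega
      · rw [Fin.succAbove_of_le_castSucc _ _ (by simp [Fin.le_def]; omega)]
        simp only [M, updateRow_apply, chainExtension, padZero, Fin.ext_iff, Fin.val_last,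
          Fin.val_castSucc, Fin.val_succ]
        split_ifs <;> first | rfl | omega
    rw [det_succ_column_of_forall_ne M _ _ hcol, hentry, hminor, ih]
    simp [Odd.neg_one_pow (⟨ℓ + m, by ring⟩ : Odd (ℓ + m + (ℓ + (m + 1))))]

end ChainExtension

section CombMatrix

variable {K : Type*} [CommRing K] {ℓ n : ℕ} (A : Matrix (Fin (ℓ + 1)) (Fin (ℓ + 1)) K) (c : K)

theorem recessiveMatrix_eq_updateRow :
    recessiveMatrix ℓ A c = A.charmatrix.updateRow (Fin.last ℓ)
      (fun j => -C (Function.update (A (Fin.last ℓ)) (Fin.last ℓ) c j)) := by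
  ext i j
  simp only [recessiveMatrix, updateRow_apply, Function.update_apply, Fin.ext_iff, Fin.val_last]
  split_ifs <;> first | rfl | omega

theorem charmatrix_combMatrix (hn : 1 ≤ n) :
    (combMatrix ℓ n A c).charmatrix = (chainExtension A.charmatrix X n).updateRow (Fin.last _)
      (chainExtension A.charmatrix X n (Fin.last _) +
        padZero (fun j => -C (Function.update (A (Fin.last ℓ)) (Fin.last ℓ) c j)) n) := by
  ext i j : 1
  rcases Fin.eq_castSucc_or_eq_last i with ⟨i, rfl⟩ | rfl
  · rw [updateRow_ne (Fin.castSucc_lt_last i).ne]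
    simp only [charmatrix_apply, diagonal_apply, combMatrix, chainExtension, Fin.ext_iff,
      Fin.val_castSucc]
    split_ifs <;> first | omega | rfl | simp
  · rw [updateRow_self]
    simp only [charmatrix_apply, diagonal_apply, combMatrix, chainExtension, padZero, Pi.add_apply,
      Function.update_apply, Fin.ext_iff, Fin.val_last]
    split_ifs <;> first | omega | rfl | simp

end CombMatrix

/-- Proposition 3.6(1): `det(t·I − M) = t^n · det(t·I − A) + S(t)`, where
`S(t) = det(B(t))` is independent of `n`. -/
theorem charpoly_combMatrix {K : Type*} [CommRing K] (ℓ n : ℕ) (hn : 1 ≤ n)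
    (A : Matrix (Fin (ℓ + 1)) (Fin (ℓ + 1)) K) (c : K) :
    (combMatrix ℓ n A c).charpoly
      = X ^ n * A.charpoly + (recessiveMatrix ℓ A c).det := by
  rw [Matrix.charpoly, charmatrix_combMatrix A c hn, det_updateRow_add, updateRow_eq_self,
    det_chainExtension, det_updateRow_chainExtension_padZero, recessiveMatrix_eq_updateRow,
    Matrix.charpoly]
end

section
/- Let K be a commutative ring, let ℓ ≥ 0 and n ≥ 1 be integers, let A be an (ℓ+1)×(ℓ+1) matrix over K, and let c ∈ K. Define the (ℓ+n+1)×(ℓ+n+1) matrix M over K by: M_{i,j} = A_{i,j} for 1 ≤ i, j ≤ ℓ+1; M_{ℓ+i, ℓ+i+1} = 1 for 1 ≤ i ≤ n; M_{ℓ+n+1, j} = A_{ℓ+1, j} for 1 ≤ j ≤ ℓ; M_{ℓ+n+1, ℓ+1} = c; and all other entries equal 0. Then det(I − t·M) = t^n · U(t) + det(I − t·A), where U(t) = det(C(t)) and C(t) is the (ℓ+1)×(ℓ+1) matrix over K[t] whose rows 1 through ℓ agree with those of I − t·A and whose row ℓ+1 is (−t·A_{ℓ+1,1}, …, −t·A_{ℓ+1,ℓ},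 −t·c). -/
open Polynomial

/-- The `(ℓ+1)×(ℓ+1)` matrix over `K[t]` whose first `ℓ` rows agree with those of
`I − t·A` and whose last row is `(−t·A_{ℓ,0}, …, −t·A_{ℓ,ℓ-1}, −t·c)` (0-based
indices). -/
noncomputable def dominantMatrix {K : Type*} [CommRing K] (ℓ : ℕ)
    (A : Matrix (Fin (ℓ + 1)) (Fin (ℓ + 1)) K) (c : K) :
    Matrix (Fin (ℓ + 1)) (Fin (ℓ + 1)) (Polynomial K) := fun i j =>
  if (i : ℕ) < ℓ then
    ((1 : Matrix (Fin (ℓ + 1)) (Fin (ℓ + 1)) (Polynomial K))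
      - (X : Polynomial K) • A.map Polynomial.C) i j
  else if (j : ℕ) < ℓ then - ((X : Polynomial K) * Polynomial.C (A ⟨ℓ, Nat.lt_succ_self ℓ⟩ j))
  else - ((X : Polynomial K) * Polynomial.C c)


/-! Split the indices into the first `ℓ + 1` and the last `n`. In these blocks `I - tM` is
`[[I - tA, -t e_ℓ e_0ᵀ], [e_{n-1} rᵀ, I - tJ]]`, where `J` is the nilpotent shift and `r` is
the last row of `C(t)`. The block `I - tJ` is unipotent with inverse `∑ tᵏ Jᵏ`, whose
`(0, n-1)` entry is `t^(n-1)`, so the Schur complement is `I - tA + tⁿ e_ℓ rᵀ`; expanding its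
determinant linearly in the last row gives `det(I - tA) + tⁿ det C(t)`. -/

open Matrix

section BlockDeterminant

variable {R m o : Type*} [CommRing R] [Fintype m] [DecidableEq m] [Fintype o] [DecidableEq o]

theorem det_fromBlocks_vecMulVec (P : Matrix m m R) (S : Matrix o o R) [Invertible S]
    (u v : m → R) (a b : o → R) :
    (fromBlocks P (vecMulVec u a) (vecMulVec b v) S).det
      = S.det * (P - (a ⬝ᵥ ⅟S *ᵥ b) • vecMulVec u v).det := by
  rw [det_fromBlocks₂₂, vecMulVec_mul, vecMulVec_mul_vecMulVec, vecMulVec_smul,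
    ← dotProduct_mulVec]

theorem det_add_smul_vecMulVec_single (P : Matrix m m R) (i : m) (s : R) (v : m → R) :
    (P + s • vecMulVec (Pi.single i 1) v).det = P.det + s * (P.updateRow i v).det := by
  have hP : P + s • vecMulVec (Pi.single i 1) v = P.updateRow i (P i + s • v) := by
    ext k j
    rcases eq_or_ne k i with rfl | hk <;> simp [updateRow_apply, vecMulVec_apply, *]
  rw [hP, det_updateRow_add, updateRow_eq_self, det_updateRow_smul]

end BlockDeterminant

section Superdiagonal

variable {R : Type*} [CommRing R]

variable (R) in
def superdiag (n : ℕ) : Matrix (Fin n) (Fin n) R :=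
  of fun a b => if (a : ℕ) + 1 = b then 1 else 0

theorem det_one_sub_smul_superdiag (x : R) (n : ℕ) : (1 - x • superdiag R n).det = 1 := by
  rw [det_of_isUpperTriangular]
  · simp [superdiag]
  · intro a b (hba : b < a)
    have hba' : (b : ℕ) < a := hba
    simp [superdiag, one_apply, hba.ne', show (a : ℕ) + 1 ≠ b by omega]

theorem superdiag_mulVec_castSucc {m : ℕ} (v : Fin (m + 1) → R) (a : Fin m) :
    (superdiag R (m + 1) *ᵥ v) a.castSucc = v a.succ := by
  have hsucc (b : Fin (m + 1)) : (a : ℕ) + 1 = b ↔ a.succ = b := by simp [Fin.ext_iff]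
  simp [superdiag, mulVec, dotProduct, hsucc]

theorem superdiag_mulVec_last {m : ℕ} (v : Fin (m + 1) → R) :
    (superdiag R (m + 1) *ᵥ v) (Fin.last m) = 0 := by
  simp only [superdiag, mulVec, dotProduct, of_apply, Fin.val_last, ite_mul, one_mul, zero_mul]
  exact Finset.sum_eq_zero fun b _ => if_neg (by have := b.is_le; omega)

theorem one_sub_smul_superdiag_mulVec_pow (x : R) (m : ℕ) :
    (1 - x • superdiag R (m + 1)) *ᵥ (fun a : Fin (m + 1) => x ^ (m - (a : ℕ)))
      = Pi.single (Fin.last m) 1 := by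
  ext a
  induction a using Fin.lastCases with
  | last => simp [sub_mulVec, smul_mulVec, superdiag_mulVec_last]
  | cast a =>
    have hexp : m - (a : ℕ) = m - (a + 1) + 1 := by omega
    simp [sub_mulVec, smul_mulVec, superdiag_mulVec_castSucc, (Fin.castSucc_lt_last a).ne, hexp,
      pow_succ']

theorem invOf_one_sub_smul_superdiag_mulVec_single (x : R) (m : ℕ)
    [Invertible (1 - x • superdiag R (m + 1))] :
    ⅟(1 - x • superdiag R (m + 1)) *ᵥ Pi.single (Fin.last m) 1
      = fun a : Fin (m + 1) => x ^ (m - (a : ℕ)) := by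
  rw [← one_sub_smul_superdiag_mulVec_pow, mulVec_mulVec, invOf_mul_self, one_mulVec]

end Superdiagonal

section CombMatrix

def combBlockEquiv (ℓ m : ℕ) : Fin (ℓ + 1) ⊕ Fin (m + 1) ≃ Fin (ℓ + (m + 1) + 1) :=
  finSumFinEquiv.trans (finCongr (by omega))

lemma combBlockEquiv_inl_val (ℓ m : ℕ) (i : Fin (ℓ + 1)) :
    (combBlockEquiv ℓ m (.inl i) : ℕ) = i := by
  simp [combBlockEquiv]

lemma combBlockEquiv_inr_val (ℓ m : ℕ) (a : Fin (m + 1)) :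
    (combBlockEquiv ℓ m (.inr a) : ℕ) = ℓ + 1 + a := by
  simp [combBlockEquiv]

variable {K : Type*} [CommRing K]

theorem submatrix_combBlockEquiv_one_sub_smul_combMatrix (ℓ m : ℕ)
    (A : Matrix (Fin (ℓ + 1)) (Fin (ℓ + 1)) K) (c : K) :
    (1 - (X : K[X]) • (combMatrix ℓ (m + 1) A c).map C).submatrix
        (combBlockEquiv ℓ m) (combBlockEquiv ℓ m)
      = fromBlocks (1 - (X : K[X]) • A.map C)
          (vecMulVec (Pi.single (Fin.last ℓ) 1) (Pi.single 0 (-X)))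
          (vecMulVec (Pi.single (Fin.last m) 1) (dominantMatrix ℓ A c (Fin.last ℓ)))
          (1 - (X : K[X]) • superdiag K[X] (m + 1)) := by
  refine Matrix.ext fun i j => ?_
  rcases i with i | a <;> rcases j with j | b <;>
  · simp only [combMatrix, dominantMatrix, superdiag, submatrix_apply, fromBlocks_apply₁₁,
      fromBlocks_apply₁₂, fromBlocks_apply₂₁, fromBlocks_apply₂₂, Matrix.sub_apply,
      Matrix.smul_apply, one_apply, map_apply, of_apply, vecMulVec_apply, Pi.single_apply,
      Fin.ext_iff, combBlockEquiv_inl_val, combBlockEquiv_inr_val, Fin.val_last, Fin.val_zero,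
      smul_eq_mul, Fin.eta]
    split_ifs <;> first | omega | simp_all

theorem updateRow_last_dominantMatrix (ℓ : ℕ) (A : Matrix (Fin (ℓ + 1)) (Fin (ℓ + 1)) K)
    (c : K) :
    (1 - (X : K[X]) • A.map C).updateRow (Fin.last ℓ) (dominantMatrix ℓ A c (Fin.last ℓ))
      = dominantMatrix ℓ A c := by
  ext i j : 1
  rcases i.le_last.lt_or_eq with hi | rfl
  · have hi' : (i : ℕ) < ℓ := hi
    simp [updateRow_apply, dominantMatrix, hi.ne, hi']
  · simp

end CombMatrix

/-- Proposition 3.6(2): `det(I − t·M) = t^n · U(t) + det(I − t·A)`, where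
`U(t) = det(C(t))` is independent of `n`. -/
theorem reciprocal_charpoly_combMatrix {K : Type*} [CommRing K] (ℓ n : ℕ) (hn : 1 ≤ n)
    (A : Matrix (Fin (ℓ + 1)) (Fin (ℓ + 1)) K) (c : K) :
    ((1 : Matrix (Fin (ℓ + n + 1)) (Fin (ℓ + n + 1)) (Polynomial K))
        - (X : Polynomial K) • (combMatrix ℓ n A c).map Polynomial.C).det
      = X ^ n * (dominantMatrix ℓ A c).det
        + ((1 : Matrix (Fin (ℓ + 1)) (Fin (ℓ + 1)) (Polynomial K))
            - (X : Polynomial K) • A.map Polynomial.C).det := by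
  obtain ⟨m, rfl⟩ : ∃ m, n = m + 1 := ⟨n - 1, by omega⟩
  have hS := det_one_sub_smul_superdiag (X : K[X]) (m + 1)
  let := invertibleOfIsUnitDet _ (hS ▸ isUnit_one)
  rw [← det_submatrix_equiv_self (combBlockEquiv ℓ m),
    submatrix_combBlockEquiv_one_sub_smul_combMatrix,
    det_fromBlocks_vecMulVec, hS, one_mul, invOf_one_sub_smul_superdiag_mulVec_single,
    single_dotProduct, Fin.val_zero, Nat.sub_zero, neg_mul, ← pow_succ', neg_smul, sub_neg_eq_add,
    det_add_smul_vecMulVec_single, updateRow_last_dominantMatrix, add_comm]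
end

section
/- Fix an integer k ≥ 1 and integers m_1, …, m_k ≥ 1. The polynomial R_{(m_1,…,m_k)}(t) has a real root μ > 1 such that every complex root z of R_{(m_1,…,m_k)} satisfies |z| ≤ μ. In particular λ(R_{(m_1,…,m_k)}) > 1. -/
/-!
For `k ≥ 1` write `R_k = t·A_k`. The pair `(A_k, B_k)` with `B_k = (-1)^k A_k^*` obeys the
sign-free recursion `A' = t^M (t-1) A - 2B`, `B' = (t-1) B + 2t^(M+1) A`, and
`(t-1) B' = 2t A' + (t+1)² B`.

By induction, beyond the largest real root `μ_k > 1` of `A_k` (and `μ_0 = 1`), `A_k` has no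
complex zero and `|B_k(z)| / |A_k(z)| ≤ B_k(|z|) / A_k(|z|)`. Through the recursion this comparison
propagates by the triangle inequality, and a zero `z` of `A_{k+1}` with `|z| = r > μ_{k+1}` would
give `r^M (r-1) ≤ 2 B_k(r) / A_k(r) < r^M (r-1)`. Finally `(μ_k - 1) A_k(μ_k) = 0` and, by
continuity, `B_k(μ_k) ≥ 0`, so `A_{k+1}(μ_k) = -2 B_k(μ_k) ≤ 0` and the largest real root of
`A_{k+1}` exists and lies beyond `μ_k`.
-/

open Polynomial

/-- The polynomials `R_{(m_1, …, m_i)}` of Kin–Takasawa (the sequence `m` is indexed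
starting from `1`; the value at `0` is a dummy): `R_{(m_1)}(t) = t^{m_1+1}(t-1) - 2t`
and `R_{(m_1,…,m_i)}(t) = t^{m_i}(t-1) R_{(m_1,…,m_{i-1})}(t)
+ (-1)^i 2t (R_{(m_1,…,m_{i-1})})_*(t)` for `i ≥ 2`, where `f_*` is the reciprocal
polynomial `t^(deg f) f(1/t)`, i.e. `Polynomial.reverse`. -/
noncomputable def Rpoly (m : ℕ → ℕ) : ℕ → Polynomial ℤ
  | 0 => 1
  | 1 => X ^ (m 1 + 1) * (X - 1) - 2 * X
  | (i + 2) => X ^ (m (i + 2)) * (X - 1) * Rpoly m (i + 1)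
      + (-1 : Polynomial ℤ) ^ (i + 2) * (2 * X) * (Rpoly m (i + 1)).reverse

/-- The polynomial `P_{(m_1, …, m_{k+1})}(t) = t^{m_{k+1}} R_{(m_1,…,m_k)}(t)
+ (-1)^{k+1} (R_{(m_1,…,m_k)})_*(t)`, whose largest root is the dilatation of the
pseudo-Anosov braid `β_{(m_1,…,m_{k+1})}`. -/
noncomputable def Ppoly (m : ℕ → ℕ) (k : ℕ) : Polynomial ℤ :=
  X ^ (m (k + 1)) * Rpoly m k + (-1 : Polynomial ℤ) ^ (k + 1) * (Rpoly m k).reverse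

open Filter Set

section Reverse

variable {R : Type*} [CommRing R] {q : R[X]} (M : ℕ) (c : R)

theorem monic_X_pow_mul_X_sub_one : (X ^ M * (X - 1) : R[X]).Monic := by
  simpa using (monic_X_pow M).mul (monic_X_sub_C (1 : R))

variable [Nontrivial R]

theorem natDegree_X_pow_mul_X_sub_one : (X ^ M * (X - 1) : R[X]).natDegree = M + 1 := by
  rw [← C_1, (monic_X_pow M).natDegree_mul (monic_X_sub_C 1), natDegree_X_pow, natDegree_X_sub_C]

theorem degree_C_mul_reverse_lt (hq : q.Monic) :
    (C c * q.reverse).degree < (X ^ M * (X - 1) * q).degree := by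
  rw [degree_eq_natDegree ((monic_X_pow_mul_X_sub_one M).mul hq).ne_zero,
    (monic_X_pow_mul_X_sub_one M).natDegree_mul hq, natDegree_X_pow_mul_X_sub_one]
  refine degree_le_natDegree.trans_lt ?_
  exact_mod_cast (natDegree_C_mul_le c _).trans_lt
    ((reverse_natDegree_le q).trans_lt (by omega))

theorem monic_X_pow_mul_X_sub_one_mul_add (hq : q.Monic) :
    (X ^ M * (X - 1) * q + C c * q.reverse).Monic :=
  ((monic_X_pow_mul_X_sub_one M).mul hq).add_of_left (degree_C_mul_reverse_lt M c hq)

theorem natDegree_X_pow_mul_X_sub_one_mul_add (hq : q.Monic) :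
    (X ^ M * (X - 1) * q + C c * q.reverse).natDegree = M + 1 + q.natDegree := by
  rw [natDegree_add_eq_left_of_degree_lt (degree_C_mul_reverse_lt M c hq),
    (monic_X_pow_mul_X_sub_one M).natDegree_mul hq, natDegree_X_pow_mul_X_sub_one]

theorem reverse_X_pow_mul_X_sub_one_mul_add (hq : q.Monic) :
    (X ^ M * (X - 1) * q + C c * q.reverse).reverse
      = (1 - X) * q.reverse + C c * X ^ (M + 1) * q := by
  have hfactor : reflect (M + 1) (X ^ M * (X - 1) : R[X]) = 1 - X := by
    rw [show (X ^ M * (X - 1) : R[X]) = X ^ (M + 1) - X ^ M by ring, reflect_sub,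
      reflect_monomial, reflect_monomial, revAt_le le_rfl, revAt_le M.le_succ]
    simp
  have hleft : reflect (M + 1 + q.natDegree) (X ^ M * (X - 1) * q) = (1 - X) * q.reverse := by
    rw [reflect_mul _ _ (natDegree_X_pow_mul_X_sub_one M).le le_rfl, hfactor, reverse]
  have hright : reflect (M + 1 + q.natDegree) q.reverse = X ^ (M + 1) * q := by
    rw [← mul_one q.reverse, add_comm,
      reflect_mul _ _ (reverse_natDegree_le q) (natDegree_one.trans_le (Nat.zero_le _)),
      reverse, reflect_reflect, reflect_one, mul_comm]
  rw [reverse, natDegree_X_pow_mul_X_sub_one_mul_add M c hq, reflect_add, reflect_C_mul,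
    hleft, hright, mul_assoc]

end Reverse

section Transition

variable {R : Type*} [CommRing R] (M : ℕ)

def nextA (x a b : R) : R := x ^ M * (x - 1) * a - 2 * b

def nextB (x a b : R) : R := (x - 1) * b + 2 * x ^ (M + 1) * a

theorem sub_one_mul_nextB (x a b : R) :
    (x - 1) * nextB M x a b = 2 * x * nextA M x a b + (x + 1) ^ 2 * b := by
  simp only [nextA, nextB]; ring

theorem aeval_nextA {A : Type*} [CommRing A] [Algebra R A] (x : A) (a b : R[X]) :
    aeval x (nextA M X a b) = nextA M x (aeval x a) (aeval x b) := by
  simp [nextA, map_ofNat]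

theorem aeval_nextB {A : Type*} [CommRing A] [Algebra R A] (x : A) (a b : R[X]) :
    aeval x (nextB M X a b) = nextB M x (aeval x a) (aeval x b) := by
  simp [nextB, map_ofNat]

end Transition

noncomputable def ABpoly (m : ℕ → ℕ) : ℕ → ℤ[X] × ℤ[X]
  | 0 => (1, 1)
  | i + 1 => (nextA (m (i + 1)) X (ABpoly m i).1 (ABpoly m i).2,
      nextB (m (i + 1)) X (ABpoly m i).1 (ABpoly m i).2)

noncomputable def Apoly (m : ℕ → ℕ) (i : ℕ) : ℤ[X] := (ABpoly m i).1

noncomputable def Bpoly (m : ℕ → ℕ) (i : ℕ) : ℤ[X] := (ABpoly m i).2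

section Algebra

variable (m : ℕ → ℕ)

theorem Apoly_zero : Apoly m 0 = 1 := rfl

theorem Bpoly_zero : Bpoly m 0 = 1 := rfl

theorem Apoly_succ (i : ℕ) : Apoly m (i + 1) = nextA (m (i + 1)) X (Apoly m i) (Bpoly m i) := rfl

theorem Bpoly_succ (i : ℕ) : Bpoly m (i + 1) = nextB (m (i + 1)) X (Apoly m i) (Bpoly m i) := rfl

theorem Apoly_succ_of_Bpoly_eq {i : ℕ} (hb : Bpoly m i = C ((-1) ^ i) * (Apoly m i).reverse) :
    Apoly m (i + 1) = X ^ m (i + 1) * (X - 1) * Apoly m i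
      + C (2 * (-1) ^ (i + 1)) * (Apoly m i).reverse := by
  rw [Apoly_succ, nextA, hb, pow_succ]
  simp only [map_mul, map_neg, map_one, map_ofNat]
  ring

theorem monic_Apoly_and_Bpoly_eq (i : ℕ) :
    (Apoly m i).Monic ∧ Bpoly m i = C ((-1) ^ i) * (Apoly m i).reverse := by
  induction i with
  | zero => simpa [Apoly_zero, Bpoly_zero] using (reverse_C (1 : ℤ)).symm
  | succ i ih =>
    obtain ⟨hmonic, hb⟩ := ih
    have ha := Apoly_succ_of_Bpoly_eq m hb
    refine ⟨ha ▸ monic_X_pow_mul_X_sub_one_mul_add _ _ hmonic, ?_⟩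
    have hs : C ((-1) ^ i) * C ((-1) ^ i) = (1 : ℤ[X]) := by
      rw [← C_mul, ← mul_pow, neg_one_mul, neg_neg, one_pow, C_1]
    rw [Bpoly_succ, nextB, hb, ha, reverse_X_pow_mul_X_sub_one_mul_add _ _ hmonic, pow_succ _ i]
    simp only [map_mul, map_neg, map_one, map_ofNat]
    linear_combination (-2 * X ^ (m (i + 1) + 1) * Apoly m i) * hs

theorem monic_Apoly (i : ℕ) : (Apoly m i).Monic := (monic_Apoly_and_Bpoly_eq m i).1

theorem Bpoly_eq_C_mul_reverse (i : ℕ) : Bpoly m i = C ((-1) ^ i) * (Apoly m i).reverse :=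
  (monic_Apoly_and_Bpoly_eq m i).2

theorem natDegree_Apoly_succ_pos (i : ℕ) : 0 < (Apoly m (i + 1)).natDegree := by
  rw [Apoly_succ_of_Bpoly_eq m (Bpoly_eq_C_mul_reverse m i),
    natDegree_X_pow_mul_X_sub_one_mul_add _ _ (monic_Apoly m i)]
  omega

theorem Rpoly_succ_eq_X_mul_Apoly (i : ℕ) : Rpoly m (i + 1) = X * Apoly m (i + 1) := by
  induction i with
  | zero => simp only [Rpoly, Apoly_succ, Apoly_zero, Bpoly_zero, nextA]; ring
  | succ i ih =>
    rw [Rpoly, ih, reverse_X_mul, Apoly_succ_of_Bpoly_eq m (Bpoly_eq_C_mul_reverse m (i + 1))]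
    simp only [map_mul, map_pow, map_neg, map_one, map_ofNat]
    ring

end Algebra

theorem exists_greatest_zero_of_tendsto_atTop {f : ℝ → ℝ} (hf : Continuous f)
    (htop : Tendsto f atTop atTop) {x₀ : ℝ} (hx₀ : f x₀ ≤ 0) :
    ∃ μ, x₀ ≤ μ ∧ f μ = 0 ∧ ∀ r, μ < r → 0 < f r := by
  set S := {x | x₀ ≤ x ∧ f x ≤ 0}
  obtain ⟨B, hB⟩ := eventually_atTop.mp (htop.eventually_gt_atTop 0)
  have hbdd : BddAbove S := ⟨B, fun x hx => not_lt.mp fun h => (hB x h.le).not_ge hx.2⟩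
  have hclosed : IsClosed S :=
    (isClosed_le continuous_const continuous_id).inter (isClosed_le hf continuous_const)
  have hmem : sSup S ∈ S := hclosed.csSup_mem ⟨x₀, le_rfl, hx₀⟩ hbdd
  have hpos : ∀ r, sSup S < r → 0 < f r := fun r hr =>
    not_le.mp fun h => (le_csSup hbdd ⟨hmem.1.trans hr.le, h⟩).not_gt hr
  refine ⟨sSup S, hmem.1, le_antisymm hmem.2 ?_, hpos⟩
  exact continuousWithinAt_const.closure_le (s := Ioi (sSup S))
    (by rw [closure_Ioi]; exact self_mem_Ici) hf.continuousWithinAt fun r hr => (hpos r hr).le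

theorem tendsto_aeval_atTop_of_monic {R : Type*} [CommRing R] [Algebra R ℝ] {p : R[X]}
    (hp : p.Monic) (hdeg : 0 < p.natDegree) : Tendsto (fun x : ℝ => aeval x p) atTop atTop := by
  have := tendsto_atTop_of_leadingCoeff_nonneg (p.map (algebraMap R ℝ))
    (natDegree_pos_iff_degree_pos.mp (by rwa [hp.natDegree_map]))
    ((hp.map (algebraMap R ℝ)).leadingCoeff ▸ zero_le_one)
  simpa [eval_map_algebraMap] using this

theorem aeval_ofReal (p : ℤ[X]) (r : ℝ) : aeval (r : ℂ) p = aeval r p := by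
  simpa using aeval_algebraMap_apply ℂ r p

section Comparison

variable {M : ℕ} {z α β : ℂ} {A B : ℝ}

theorem nextA_ne_zero_of_norm_mul_le (hA : 0 ≤ A) (hα : α ≠ 0)
    (hdom : ‖β‖ * A ≤ B * ‖α‖) (hA' : 0 < nextA M ‖z‖ A B) : nextA M z α β ≠ 0 := by
  intro h
  have hnorm : ‖z‖ ^ M * ‖z - 1‖ * ‖α‖ = 2 * ‖β‖ := by
    simpa using congrArg norm (sub_eq_zero.mp h)
  have hz : ‖z‖ - 1 ≤ ‖z - 1‖ := by simpa using norm_sub_norm_le z 1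
  have : ‖α‖ * nextA M ‖z‖ A B ≤ 0 :=
    calc ‖α‖ * nextA M ‖z‖ A B
        = ‖z‖ ^ M * (‖z‖ - 1) * ‖α‖ * A - 2 * (B * ‖α‖) := by rw [nextA]; ring
      _ ≤ ‖z‖ ^ M * ‖z - 1‖ * ‖α‖ * A - 2 * (‖β‖ * A) := by gcongr
      _ = 0 := by rw [hnorm]; ring
  exact this.not_gt (mul_pos (norm_pos_iff.mpr hα) hA')

theorem norm_nextB_mul_le (hz : 1 < ‖z‖) (hB : 0 ≤ B)
    (hdom : ‖β‖ * A ≤ B * ‖α‖) (hA' : 0 ≤ nextA M ‖z‖ A B) :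
    ‖nextB M z α β‖ * nextA M ‖z‖ A B ≤ nextB M ‖z‖ A B * ‖nextA M z α β‖ := by
  set r := ‖z‖
  have hz₁ : r - 1 ≤ ‖z - 1‖ := by simpa using norm_sub_norm_le z 1
  have hz₂ : ‖z + 1‖ ≤ r + 1 := by simpa using norm_add_le z 1
  have hα' : r ^ M * (r - 1) * ‖α‖ - 2 * ‖β‖ ≤ ‖nextA M z α β‖ :=
    calc r ^ M * (r - 1) * ‖α‖ - 2 * ‖β‖ ≤ ‖z ^ M * (z - 1) * α‖ - ‖2 * β‖ := by
          simp only [norm_mul, norm_pow, Complex.norm_ofNat]; gcongr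
      _ ≤ ‖nextA M z α β‖ := norm_sub_norm_le _ _
  have hβA' : ‖β‖ * nextA M r A B ≤ B * ‖nextA M z α β‖ :=
    calc ‖β‖ * nextA M r A B = r ^ M * (r - 1) * (‖β‖ * A) - 2 * B * ‖β‖ := by rw [nextA]; ring
      _ ≤ r ^ M * (r - 1) * (B * ‖α‖) - 2 * B * ‖β‖ := by gcongr
      _ = B * (r ^ M * (r - 1) * ‖α‖ - 2 * ‖β‖) := by ring
      _ ≤ B * ‖nextA M z α β‖ := by gcongr
  have hβ' : (r - 1) * ‖nextB M z α β‖ ≤ 2 * r * ‖nextA M z α β‖ + (r + 1) ^ 2 * ‖β‖ :=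
    calc (r - 1) * ‖nextB M z α β‖ ≤ ‖(z - 1) * nextB M z α β‖ := by rw [norm_mul]; gcongr
      _ = ‖2 * z * nextA M z α β + (z + 1) ^ 2 * β‖ := by rw [sub_one_mul_nextB]
      _ ≤ 2 * r * ‖nextA M z α β‖ + (r + 1) ^ 2 * ‖β‖ := by
          refine (norm_add_le _ _).trans ?_
          simp only [norm_mul, norm_pow, Complex.norm_ofNat]; gcongr
  have hr : 0 < r - 1 := by linarith
  refine le_of_mul_le_mul_left ?_ hr
  calc (r - 1) * (‖nextB M z α β‖ * nextA M r A B)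
      = ((r - 1) * ‖nextB M z α β‖) * nextA M r A B := by ring
    _ ≤ (2 * r * ‖nextA M z α β‖ + (r + 1) ^ 2 * ‖β‖) * nextA M r A B := by gcongr
    _ = 2 * r * nextA M r A B * ‖nextA M z α β‖ + (r + 1) ^ 2 * (‖β‖ * nextA M r A B) := by ring
    _ ≤ 2 * r * nextA M r A B * ‖nextA M z α β‖ + (r + 1) ^ 2 * (B * ‖nextA M z α β‖) := by
        gcongr
    _ = ((r - 1) * nextB M r A B) * ‖nextA M z α β‖ := by rw [sub_one_mul_nextB]; ring
    _ = (r - 1) * (nextB M r A B * ‖nextA M z α β‖) := by ring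

end Comparison

section Dominance

variable {μ : ℝ} {a b : ℤ[X]}

/-- Outside the disc of radius `μ`, `a` has no zeros and, on each circle `‖z‖ = r`, `‖b / a‖` is
largest at `z = r`. -/
structure RadiallyDominant (μ : ℝ) (a b : ℤ[X]) : Prop where
  pos : ∀ r : ℝ, μ < r → 0 < aeval r a
  ne_zero : ∀ z : ℂ, μ < ‖z‖ → aeval z a ≠ 0
  norm_mul_le : ∀ z : ℂ, μ < ‖z‖ → ‖aeval z b‖ * aeval ‖z‖ a ≤ aeval ‖z‖ b * ‖aeval z a‖

theorem RadiallyDominant.nonneg (h : RadiallyDominant μ a b) (hμ : 0 ≤ μ) {r : ℝ} (hr : μ < r) :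
    0 ≤ aeval r b := by
  have hnorm : ‖(r : ℂ)‖ = r := by simp [abs_of_nonneg (hμ.trans hr.le)]
  have ha := h.pos r hr
  have hle := h.norm_mul_le r (by rwa [hnorm])
  rw [hnorm, aeval_ofReal, aeval_ofReal, Complex.norm_real, Complex.norm_real, Real.norm_eq_abs,
    Real.norm_eq_abs, abs_of_pos ha] at hle
  exact (abs_nonneg _).trans (le_of_mul_le_mul_right hle ha)

theorem RadiallyDominant.next {M : ℕ} (h : RadiallyDominant μ a b) (hμ : 1 ≤ μ)
    (ha : (μ - 1) * aeval μ a = 0)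
    (htop : Tendsto (fun x : ℝ => aeval x (nextA M X a b)) atTop atTop) :
    ∃ μ', μ ≤ μ' ∧ aeval μ' (nextA M X a b) = 0 ∧
      RadiallyDominant μ' (nextA M X a b) (nextB M X a b) := by
  have hbμ : 0 ≤ aeval μ b :=
    continuousWithinAt_const.closure_le (s := Ioi μ) (by rw [closure_Ioi]; exact self_mem_Ici)
      (Polynomial.continuous_aeval b).continuousWithinAt fun r hr => h.nonneg (by linarith) hr
  have hstart : aeval μ (nextA M X a b) ≤ 0 := by
    rw [aeval_nextA, nextA, mul_assoc, ha]
    linarith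
  obtain ⟨μ', hμμ', hroot, hpos⟩ :=
    exists_greatest_zero_of_tendsto_atTop (Polynomial.continuous_aeval _) htop hstart
  refine ⟨μ', hμμ', hroot, ⟨hpos, fun z hz => ?_, fun z hz => ?_⟩⟩ <;>
    have hzμ : μ < ‖z‖ := hμμ'.trans_lt hz
  · rw [aeval_nextA]
    exact nextA_ne_zero_of_norm_mul_le (h.pos _ hzμ).le (h.ne_zero z hzμ) (h.norm_mul_le z hzμ)
      (by simpa only [aeval_nextA] using hpos ‖z‖ hz)
  · rw [aeval_nextA, aeval_nextA, aeval_nextB, aeval_nextB]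
    exact norm_nextB_mul_le (by linarith) (h.nonneg (by linarith) hzμ) (h.norm_mul_le z hzμ)
      (by simpa only [aeval_nextA] using (hpos ‖z‖ hz).le)

end Dominance

theorem radiallyDominant_Apoly_zero (m : ℕ → ℕ) : RadiallyDominant 1 (Apoly m 0) (Bpoly m 0) :=
  ⟨by simp [Apoly_zero], by simp [Apoly_zero], by simp [Apoly_zero, Bpoly_zero]⟩

theorem tendsto_aeval_Apoly_succ (m : ℕ → ℕ) (i : ℕ) :
    Tendsto (fun x : ℝ => aeval x (Apoly m (i + 1))) atTop atTop :=
  tendsto_aeval_atTop_of_monic (monic_Apoly m (i + 1)) (natDegree_Apoly_succ_pos m i)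

theorem exists_root_radiallyDominant_Apoly (m : ℕ → ℕ) {i : ℕ} (hi : 1 ≤ i) :
    ∃ μ, 1 < μ ∧ aeval μ (Apoly m i) = 0 ∧ RadiallyDominant μ (Apoly m i) (Bpoly m i) := by
  induction i, hi using Nat.le_induction with
  | base =>
    obtain ⟨μ, hμ, hroot, hdom⟩ :=
      (radiallyDominant_Apoly_zero m).next le_rfl (by simp) (tendsto_aeval_Apoly_succ m 0)
    refine ⟨μ, hμ.lt_of_ne ?_, hroot, hdom⟩
    rintro rfl
    norm_num [Apoly_succ, Apoly_zero, Bpoly_zero, aeval_nextA, nextA, map_ofNat] at hroot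
  | succ i _ ih =>
    obtain ⟨μ, hμ, hroot, hdom⟩ := ih
    obtain ⟨μ', hμμ', hroot', hdom'⟩ :=
      hdom.next hμ.le (by rw [hroot, mul_zero]) (tendsto_aeval_Apoly_succ m i)
    exact ⟨μ', hμ.trans_le hμμ', hroot', hdom'⟩

theorem maxRootAbs_eq {f : ℤ[X]} {μ : ℝ} (hμ : 0 ≤ μ) (hroot : aeval (μ : ℂ) f = 0)
    (hbound : ∀ z : ℂ, aeval z f = 0 → ‖z‖ ≤ μ) : maxRootAbs f = μ :=
  IsGreatest.csSup_eq ⟨⟨μ, hroot, by simp [abs_of_nonneg hμ]⟩, by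
    rintro _ ⟨z, hz, rfl⟩
    exact hbound z hz⟩

theorem Rpoly_has_large_root_general (k : ℕ) (hk : 1 ≤ k) (m : ℕ → ℕ) :
    (∃ μ : ℝ, 1 < μ ∧ Polynomial.aeval (μ : ℂ) (Rpoly m k) = 0 ∧
      (∀ z : ℂ, Polynomial.aeval z (Rpoly m k) = 0 → ‖z‖ ≤ μ) ∧
      maxRootAbs (Rpoly m k) = μ) ∧
    1 < maxRootAbs (Rpoly m k) := by
  obtain ⟨μ, hμ, hroot, hdom⟩ := exists_root_radiallyDominant_Apoly m hk
  have hR : Rpoly m k = X * Apoly m k := by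
    obtain ⟨i, rfl⟩ := Nat.exists_eq_add_of_le' hk
    exact Rpoly_succ_eq_X_mul_Apoly m i
  have hrootC : aeval (μ : ℂ) (Rpoly m k) = 0 := by
    rw [hR, map_mul, aeval_ofReal (Apoly m k), hroot, Complex.ofReal_zero, mul_zero]
  have hbound : ∀ z : ℂ, aeval z (Rpoly m k) = 0 → ‖z‖ ≤ μ := by
    intro z hz
    rw [hR, map_mul, aeval_X, mul_eq_zero] at hz
    by_contra! hlt
    rcases hz with rfl | hz
    · rw [norm_zero] at hlt
      linarith
    · exact hdom.ne_zero z hlt hz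
  have hmax := maxRootAbs_eq (by linarith) hrootC hbound
  exact ⟨⟨μ, hμ, hrootC, hbound, hmax⟩, hmax ▸ hμ⟩

/-- The polynomial `R_{(m_1,…,m_k)}` has a real root `μ > 1` dominating all its
complex roots in absolute value; in particular `λ(R_{(m_1,…,m_k)}) > 1`. -/
theorem Rpoly_has_large_root (k : ℕ) (hk : 1 ≤ k) (m : ℕ → ℕ)
    (hm : ∀ j, 1 ≤ j → j ≤ k → 1 ≤ m j) :
    (∃ μ : ℝ, 1 < μ ∧ Polynomial.aeval (μ : ℂ) (Rpoly m k) = 0 ∧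
      (∀ z : ℂ, Polynomial.aeval z (Rpoly m k) = 0 → ‖z‖ ≤ μ) ∧
      maxRootAbs (Rpoly m k) = μ) ∧
    1 < maxRootAbs (Rpoly m k) :=
  Rpoly_has_large_root_general k hk m
end

section
/- Fix an integer k ≥ 1. For every ε > 0 there exists an integer M ≥ 1 such that for all integers m_1, …, m_{k+1} ≥ M, one has 1 < λ(P_{(m_1,…,m_{k+1})}) < 1 + ε. In other words, λ(P_{(m_1,…,m_{k+1})}) → 1 as m_1, …, m_{k+1} all tend to ∞. -/
/-!
Write `R_i` for `R_{(m_1,…,m_i)}` and `D_i` for its degree, and fix `δ > 0` and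
`γ = δ / (2(1+δ))`, so that `|z - 1| ≥ 2γ|z|` for `|z| ≥ 1 + δ`. When all `m_j` are large,
induction on `i` shows that `R_i` is monic, `|R_i(z)| ≤ 4^i max(1,|z|)^{D_i}` everywhere, and
`|R_i(z)| ≥ γ^i |z|^{D_i}` for `|z| ≥ 1 + δ`, where the term `t^{m_i}(t-1)R_{i-1}` dominates the
recursion. The upper bound transfers to `(R_k)_*`, so `t^{m_{k+1}} R_k` dominates `P` on
`|z| ≥ 1 + δ` and every root of `P` has modulus `< 1 + δ`.

For the lower bound, follow the largest real root `ρ_i ∈ (1, 1 + δ)` of `R_i`: `R_i > 0` on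
`(ρ_i, 1 + δ]` and `(-1)^i R_i(1/t) > 0` on `[ρ_i, 1 + δ]`. These signs give
`R_{i+1}(ρ_i) < 0 < R_{i+1}(1 + δ)`, hence a root `ρ_{i+1} > ρ_i` with the same signs, and at the
end `P(ρ_k) < 0 < P(1 + δ)`, so `P` has a real root `> 1`.
-/

open Polynomial

open Set

theorem aeval_reverse {R K : Type*} [CommRing R] [Field K] [Algebra R K] (f : R[X]) {w : K}
    (hw : w ≠ 0) : aeval w f.reverse = w ^ f.natDegree * aeval w⁻¹ f := by
  let _ : Invertible w⁻¹ := invertibleOfNonzero (inv_ne_zero hw)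
  have h := eval₂_reverse_mul_pow (algebraMap R K) w⁻¹ f
  rw [invOf_eq_inv, inv_inv] at h
  rw [aeval_def, aeval_def, ← h, inv_pow, mul_left_comm, mul_inv_cancel₀ (pow_ne_zero _ hw),
    mul_one]

theorem aeval_int_ofReal (f : ℤ[X]) (t : ℝ) : aeval (t : ℂ) f = aeval t f := by
  rw [← Complex.coe_algebraMap, aeval_algebraMap_apply, Complex.coe_algebraMap]

theorem norm_aeval_int_ofReal (f : ℤ[X]) (t : ℝ) : ‖aeval (t : ℂ) f‖ = |aeval t f| := by
  rw [aeval_int_ofReal, Complex.norm_real, Real.norm_eq_abs]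

theorem norm_aeval_reverse_le {f : ℤ[X]} {B : ℝ} (hlead : |(f.leadingCoeff : ℝ)| ≤ B)
    (hf : ∀ z : ℂ, ‖aeval z f‖ ≤ B * max 1 ‖z‖ ^ f.natDegree) (z : ℂ) :
    ‖aeval z f.reverse‖ ≤ B * max 1 ‖z‖ ^ f.natDegree := by
  rcases eq_or_ne z 0 with rfl | hz
  · simpa [← coeff_zero_eq_aeval_zero', coeff_zero_reverse] using hlead
  rw [aeval_reverse f hz, norm_mul, norm_pow]
  calc ‖z‖ ^ f.natDegree * ‖aeval z⁻¹ f‖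
      ≤ ‖z‖ ^ f.natDegree * (B * max 1 ‖z⁻¹‖ ^ f.natDegree) := by gcongr; exact hf _
    _ = B * (‖z‖ * max 1 ‖z‖⁻¹) ^ f.natDegree := by rw [norm_inv]; ring
    _ = B * max 1 ‖z‖ ^ f.natDegree := by
      rw [mul_max_of_nonneg _ _ (norm_nonneg z), mul_one, mul_inv_cancel₀ (norm_ne_zero_iff.2 hz),
        max_comm]

theorem neg_abs_le_neg_one_pow_mul (k : ℕ) (x : ℝ) : -|x| ≤ (-1) ^ k * x := by
  simpa [abs_mul] using neg_abs_le ((-1) ^ k * x)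

theorem exists_mem_Ioo_eq_zero_forall_pos {f : ℝ → ℝ} {a b : ℝ} (hab : a ≤ b)
    (hf : ContinuousOn f (Icc a b)) (ha : f a < 0) (hb : 0 < f b) :
    ∃ c ∈ Ioo a b, f c = 0 ∧ ∀ t ∈ Ioc c b, 0 < f t := by
  set Z := Icc a b ∩ f ⁻¹' {0}
  have hZ : IsCompact Z := isCompact_Icc.of_isClosed_subset
    (hf.preimage_isClosed_of_isClosed isClosed_Icc isClosed_singleton) inter_subset_left
  obtain ⟨x, hx, hfx⟩ := intermediate_value_Icc hab hf ⟨ha.le, hb.le⟩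
  obtain ⟨⟨hac, hcb⟩, hfc⟩ := hZ.sSup_mem ⟨x, hx, hfx⟩
  refine ⟨sSup Z, ⟨hac.lt_of_ne ?_, hcb.lt_of_ne ?_⟩, hfc, fun t ht => ?_⟩
  · intro h; rw [← h] at hfc; exact ha.ne hfc
  · intro h; rw [h] at hfc; exact hb.ne' hfc
  by_contra! hft
  -- a zero to the right of `t` would exceed `sSup Z`
  obtain ⟨y, hy, hfy⟩ := intermediate_value_Icc ht.2
    (hf.mono (Icc_subset_Icc (hac.trans ht.1.le) le_rfl)) ⟨hft, hb.le⟩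
  exact (ht.1.trans_le hy.1).not_ge
    (le_csSup hZ.bddAbove ⟨⟨hac.trans (ht.1.le.trans hy.1), hy.2⟩, hfy⟩)

theorem le_maxRootAbs {f : ℤ[X]} {c : ℝ} (hc : ∀ z : ℂ, aeval z f = 0 → ‖z‖ ≤ c) {z : ℂ}
    (hz : aeval z f = 0) : ‖z‖ ≤ maxRootAbs f :=
  le_csSup ⟨c, by rintro _ ⟨w, hw, rfl⟩; exact hc w hw⟩ ⟨z, hz, rfl⟩

theorem maxRootAbs_le {f : ℤ[X]} {c : ℝ} (hc : ∀ z : ℂ, aeval z f = 0 → ‖z‖ ≤ c) {z : ℂ}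
    (hz : aeval z f = 0) : maxRootAbs f ≤ c :=
  csSup_le ⟨_, z, hz, rfl⟩ (by rintro _ ⟨w, hw, rfl⟩; exact hc w hw)

noncomputable def stepPoly (n i : ℕ) (f : ℤ[X]) : ℤ[X] :=
  X ^ n * (X - 1) * f + (-1) ^ (i + 1) * (2 * X) * f.reverse

-- Starting the recursion at `X`, whose bounds are trivial, gives a uniform induction.
theorem Rpoly_one (m : ℕ → ℕ) : Rpoly m 1 = stepPoly (m 1) 0 X := by
  have hX : (X : ℤ[X]).reverse = 1 := by simpa using (reverse_X_mul (C (1 : ℤ))).trans (reverse_C 1)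
  simp only [Rpoly, stepPoly, hX]
  ring

theorem Rpoly_add_two (m : ℕ → ℕ) (i : ℕ) :
    Rpoly m (i + 2) = stepPoly (m (i + 2)) (i + 1) (Rpoly m (i + 1)) :=
  rfl

theorem aeval_stepPoly {A : Type*} [CommRing A] (n i : ℕ) (f : ℤ[X]) (z : A) :
    aeval z (stepPoly n i f) =
      z ^ n * (z - 1) * aeval z f + (-1) ^ (i + 1) * (2 * z) * aeval z f.reverse := by
  simp [stepPoly, map_ofNat]

theorem Polynomial.Monic.stepPoly {f : ℤ[X]} (hf : f.Monic) {n : ℕ} (hn : 1 ≤ n) (i : ℕ) :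
    (stepPoly n i f).Monic ∧ (stepPoly n i f).natDegree = n + 1 + f.natDegree := by
  have hX1 : (X - 1 : ℤ[X]).Monic := by simpa using monic_X_sub_C (1 : ℤ)
  have hlead : (X ^ n * (X - 1) * f).Monic := ((monic_X_pow n).mul hX1).mul hf
  have hlead_deg : (X ^ n * (X - 1) * f).natDegree = n + 1 + f.natDegree := by
    rw [((monic_X_pow n).mul hX1).natDegree_mul hf, (monic_X_pow n).natDegree_mul hX1,
      natDegree_X_pow, show (X - 1 : ℤ[X]).natDegree = 1 by simpa using natDegree_X_sub_C (1 : ℤ)]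
  have htail : ((-1) ^ (i + 1) * (2 * X) * f.reverse : ℤ[X]).natDegree < n + 1 + f.natDegree := by
    have : ((-1) ^ (i + 1) * (2 * X) * f.reverse : ℤ[X]).natDegree ≤ 0 + 1 + f.natDegree :=
      natDegree_mul_le_of_le (natDegree_mul_le_of_le (by simp) (by compute_degree))
        (reverse_natDegree_le f)
    omega
  rw [← hlead_deg] at htail
  exact ⟨hlead.add_of_left (degree_lt_degree htail), by
    rw [_root_.stepPoly, natDegree_add_eq_left_of_natDegree_lt htail, hlead_deg]⟩

variable {δ γ : ℝ}

theorem step_estimate (hδ : 0 ≤ δ) (hγ0 : 0 ≤ γ) (hγ : 2 * γ * (1 + δ) ≤ δ) {i n D : ℕ}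
    (hn : 2 * 4 ^ i ≤ γ ^ (i + 1) * (1 + δ) ^ n) {r a b : ℝ} (hr : 1 + δ ≤ r)
    (ha : γ ^ i * r ^ D ≤ a) (hb : b ≤ 4 ^ i * r ^ D) :
    γ ^ (i + 1) * r ^ (n + 1 + D) ≤ r ^ n * (r - 1) * a - 2 * r * b := by
  have hr0 : 0 ≤ r := by linarith
  have hgap : 2 * γ * r ≤ r - 1 := by nlinarith [mul_nonneg (sub_nonneg.2 hr) hγ0]
  have hpow : 2 * 4 ^ i ≤ γ ^ (i + 1) * r ^ n :=
    hn.trans (by gcongr)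
  calc γ ^ (i + 1) * r ^ (n + 1 + D) = r * r ^ D * (γ ^ (i + 1) * r ^ n) := by ring
    _ ≤ r * r ^ D * (2 * γ ^ (i + 1) * r ^ n - 2 * 4 ^ i) := by gcongr; linarith
    _ = r ^ n * (2 * γ * r) * (γ ^ i * r ^ D) - 2 * r * (4 ^ i * r ^ D) := by ring
    _ ≤ r ^ n * (r - 1) * a - 2 * r * b := by
        gcongr
        exact mul_nonneg (pow_nonneg hr0 n) (by linarith)

theorem four_pow_lt_mul_pow (hδ : 0 ≤ δ) (hγ0 : 0 ≤ γ) (hγ1 : γ ≤ 1) {k n : ℕ}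
    (hn : 2 * 4 ^ k ≤ γ ^ (k + 1) * (1 + δ) ^ n) {r : ℝ} (hr : 1 + δ ≤ r) :
    4 ^ k < γ ^ k * r ^ n :=
  calc (4 : ℝ) ^ k < 2 * 4 ^ k := by linarith [pow_pos (four_pos : (0 : ℝ) < 4) k]
    _ ≤ γ ^ (k + 1) * (1 + δ) ^ n := hn
    _ ≤ γ ^ k * r ^ n := mul_le_mul (pow_le_pow_of_le_one hγ0 hγ1 (Nat.le_succ k))
        (pow_le_pow_left₀ (by linarith) hr n) (by positivity) (by positivity)

theorem two_mul_four_pow_le {γ x : ℝ} (hγ0 : 0 < γ) (hγ1 : γ ≤ 1) (hx : 1 ≤ x) {i k M n : ℕ}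
    (hik : i ≤ k) (hMn : M ≤ n) (hM : 2 * 4 ^ k / γ ^ (k + 1) < x ^ M) :
    2 * 4 ^ i ≤ γ ^ (i + 1) * x ^ n := by
  rw [div_lt_iff₀' (by positivity)] at hM
  calc (2 : ℝ) * 4 ^ i ≤ 2 * 4 ^ k := by gcongr; norm_num
    _ ≤ γ ^ (k + 1) * x ^ M := hM.le
    _ ≤ γ ^ (i + 1) * x ^ n := mul_le_mul (pow_le_pow_of_le_one hγ0.le hγ1 (by omega))
        (pow_le_pow_right₀ hx hMn) (by positivity) (by positivity)

structure GrowthBounds (δ γ : ℝ) (i : ℕ) (f : ℤ[X]) : Prop where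
  monic : f.Monic
  norm_le : ∀ z : ℂ, ‖aeval z f‖ ≤ 4 ^ i * max 1 ‖z‖ ^ f.natDegree
  le_norm : ∀ z : ℂ, 1 + δ ≤ ‖z‖ → γ ^ i * ‖z‖ ^ f.natDegree ≤ ‖aeval z f‖

-- `ρ` will be the largest root of `f` in `(1, 1 + δ)`; the second condition is what makes the
-- next polynomial of the recursion negative at `ρ`.
def SignsAbove (δ : ℝ) (i : ℕ) (f : ℤ[X]) (ρ : ℝ) : Prop :=
  (∀ t ∈ Ioc ρ (1 + δ), 0 < aeval t f) ∧ ∀ t ∈ Icc ρ (1 + δ), 0 < (-1) ^ i * aeval t⁻¹ f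

theorem growthBounds_X : GrowthBounds δ γ 0 X where
  monic := monic_X
  norm_le z := by simp
  le_norm z _ := by simp

theorem signsAbove_X : SignsAbove δ 0 X 1 :=
  ⟨fun t ht => by simpa using zero_lt_one.trans ht.1,
    fun t ht => by simpa using zero_lt_one.trans_le ht.1⟩

namespace GrowthBounds

variable {i : ℕ} {f : ℤ[X]}

theorem norm_aeval_reverse_le (hf : GrowthBounds δ γ i f) (z : ℂ) :
    ‖aeval z f.reverse‖ ≤ 4 ^ i * max 1 ‖z‖ ^ f.natDegree :=
  _root_.norm_aeval_reverse_le (by simp [hf.monic.leadingCoeff, one_le_pow₀]) hf.norm_le z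

theorem abs_aeval_reverse_le (hf : GrowthBounds δ γ i f) {t : ℝ} (ht : 1 ≤ t) :
    |aeval t f.reverse| ≤ 4 ^ i * t ^ f.natDegree := by
  simpa [← norm_aeval_int_ofReal, abs_of_pos (zero_lt_one.trans_le ht), ht] using
    hf.norm_aeval_reverse_le t

theorem le_aeval_one_add (hf : GrowthBounds δ γ i f) (hδ : 0 ≤ δ) (hpos : 0 < aeval (1 + δ) f) :
    γ ^ i * (1 + δ) ^ f.natDegree ≤ aeval (1 + δ) f := by
  have h := hf.le_norm (1 + δ : ℝ) (by rw [Complex.norm_real, Real.norm_of_nonneg (by linarith)])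
  rwa [Complex.norm_real, Real.norm_of_nonneg (by linarith), norm_aeval_int_ofReal,
    abs_of_pos hpos] at h

theorem norm_aeval_stepPoly_le (hf : GrowthBounds δ γ i f) (n : ℕ) (z : ℂ) :
    ‖aeval z (stepPoly n i f)‖ ≤ 4 ^ (i + 1) * max 1 ‖z‖ ^ (n + 1 + f.natDegree) := by
  set R := max 1 ‖z‖
  set D := f.natDegree
  have hR : 1 ≤ R := le_max_left _ _
  have hzR : ‖z‖ ≤ R := le_max_right _ _
  have hz1 : ‖z - 1‖ ≤ 2 * R := (norm_sub_le _ _).trans (by rw [norm_one]; linarith)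
  have hRn : 1 ≤ R ^ n := one_le_pow₀ hR
  rw [aeval_stepPoly]
  calc _ ≤ ‖z‖ ^ n * ‖z - 1‖ * ‖aeval z f‖ + 2 * ‖z‖ * ‖aeval z f.reverse‖ :=
        (norm_add_le _ _).trans_eq (by simp)
    _ ≤ R ^ n * (2 * R) * (4 ^ i * R ^ D) + 2 * R * (4 ^ i * R ^ D) := by
        gcongr
        exacts [hf.norm_le z, hf.norm_aeval_reverse_le z]
    _ ≤ R ^ n * (2 * R) * (4 ^ i * R ^ D) + R ^ n * (2 * R * (4 ^ i * R ^ D)) :=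
        by gcongr _ + ?_; exact le_mul_of_one_le_left (by positivity) hRn
    _ = 4 ^ (i + 1) * R ^ (n + 1 + D) := by ring

theorem le_norm_aeval_stepPoly (hf : GrowthBounds δ γ i f) (hδ : 0 ≤ δ) (hγ0 : 0 < γ)
    (hγ : 2 * γ * (1 + δ) ≤ δ) {n : ℕ} (hn : 2 * 4 ^ i ≤ γ ^ (i + 1) * (1 + δ) ^ n) (z : ℂ)
    (hz : 1 + δ ≤ ‖z‖) :
    γ ^ (i + 1) * ‖z‖ ^ (n + 1 + f.natDegree) ≤ ‖aeval z (stepPoly n i f)‖ := by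
  have hz1 : 1 ≤ ‖z‖ := by linarith
  calc _ ≤ ‖z‖ ^ n * (‖z‖ - 1) * ‖aeval z f‖ - 2 * ‖z‖ * ‖aeval z f.reverse‖ :=
        step_estimate hδ hγ0.le hγ hn hz (hf.le_norm z hz)
          (by simpa [max_eq_right hz1] using hf.norm_aeval_reverse_le z)
    _ ≤ ‖z ^ n * (z - 1) * aeval z f‖ - ‖(-1) ^ (i + 1) * (2 * z) * aeval z f.reverse‖ := by
        simp only [norm_mul, norm_pow, norm_neg, norm_one, one_pow, one_mul, RCLike.norm_ofNat]
        gcongr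
        simpa using norm_sub_norm_le z 1
    _ ≤ _ := by rw [aeval_stepPoly]; exact norm_sub_le_norm_add _ _

theorem stepPoly (hf : GrowthBounds δ γ i f) (hδ : 0 ≤ δ) (hγ0 : 0 < γ)
    (hγ : 2 * γ * (1 + δ) ≤ δ) {n : ℕ} (hn : 2 * 4 ^ i ≤ γ ^ (i + 1) * (1 + δ) ^ n) :
    GrowthBounds δ γ (i + 1) (_root_.stepPoly n i f) := by
  have hn1 : 1 ≤ n := by
    by_contra! h
    have hγ1 : γ ^ (i + 1) ≤ 1 := pow_le_one₀ hγ0.le (by nlinarith)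
    have h4 : (1 : ℝ) ≤ 4 ^ i := one_le_pow₀ (by norm_num)
    rw [Nat.lt_one_iff.1 h, pow_zero, mul_one] at hn
    linarith
  obtain ⟨hmonic, hdeg⟩ := hf.monic.stepPoly hn1 i
  exact ⟨hmonic, hdeg ▸ hf.norm_aeval_stepPoly_le n,
    hdeg ▸ hf.le_norm_aeval_stepPoly hδ hγ0 hγ hn⟩

theorem aeval_stepPoly_one_add_pos (hf : GrowthBounds δ γ i f) (hδ : 0 ≤ δ) (hγ0 : 0 < γ)
    (hγ : 2 * γ * (1 + δ) ≤ δ) {n : ℕ} (hn : 2 * 4 ^ i ≤ γ ^ (i + 1) * (1 + δ) ^ n)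
    (hpos : 0 < aeval (1 + δ) f) : 0 < aeval (1 + δ) (_root_.stepPoly n i f) := by
  have hsign := neg_abs_le_neg_one_pow_mul (i + 1) (2 * (1 + δ) * aeval (1 + δ) f.reverse)
  rw [abs_mul, abs_of_pos (by linarith : (0 : ℝ) < 2 * (1 + δ))] at hsign
  calc 0 < γ ^ (i + 1) * (1 + δ) ^ (n + 1 + f.natDegree) := by positivity
    _ ≤ (1 + δ) ^ n * (1 + δ - 1) * aeval (1 + δ) f - 2 * (1 + δ) * |aeval (1 + δ) f.reverse| :=
        step_estimate hδ hγ0.le hγ hn le_rfl (hf.le_aeval_one_add hδ hpos)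
          (hf.abs_aeval_reverse_le (by linarith))
    _ ≤ aeval (1 + δ) (_root_.stepPoly n i f) := by rw [aeval_stepPoly]; linarith

theorem exists_root_stepPoly (hf : GrowthBounds δ γ i f) (hδ : 0 ≤ δ) (hγ0 : 0 < γ)
    (hγ : 2 * γ * (1 + δ) ≤ δ) {n : ℕ} (hn : 2 * 4 ^ i ≤ γ ^ (i + 1) * (1 + δ) ^ n) {ρ : ℝ}
    (hρ : ρ ∈ Ico 1 (1 + δ)) (hfρ : (ρ - 1) * aeval ρ f ≤ 0) (hs : SignsAbove δ i f ρ) :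
    ∃ ρ' ∈ Ioo ρ (1 + δ), aeval ρ' (_root_.stepPoly n i f) = 0 ∧
      SignsAbove δ (i + 1) (_root_.stepPoly n i f) ρ' := by
  have hρ0 : 0 < ρ := by linarith [hρ.1]
  have hneg : aeval ρ (_root_.stepPoly n i f) < 0 := by
    have h₁ := mul_nonpos_of_nonneg_of_nonpos (pow_nonneg hρ0.le n) hfρ
    have h₂ := mul_pos (by positivity : 0 < 2 * ρ * ρ ^ f.natDegree) (hs.2 ρ ⟨le_rfl, hρ.2.le⟩)
    calc aeval ρ (_root_.stepPoly n i f)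
        = ρ ^ n * ((ρ - 1) * aeval ρ f) - 2 * ρ * ρ ^ f.natDegree * ((-1) ^ i * aeval ρ⁻¹ f) := by
          rw [aeval_stepPoly, aeval_reverse f hρ0.ne']; ring
      _ < 0 := by linarith
  have hpos := hf.aeval_stepPoly_one_add_pos hδ hγ0 hγ hn (hs.1 _ ⟨hρ.2, le_rfl⟩)
  obtain ⟨ρ', hρ', hroot, hright⟩ := exists_mem_Ioo_eq_zero_forall_pos hρ.2.le
    (Polynomial.continuous_aeval _).continuousOn hneg hpos
  refine ⟨ρ', hρ', hroot, hright, fun t ht => ?_⟩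
  have hρt : ρ < t := hρ'.1.trans_le ht.1
  have ht0 : 0 < t := hρ0.trans hρt
  have ht1 : 0 ≤ 1 - t⁻¹ := sub_nonneg.2 (inv_le_one_of_one_le₀ (by linarith [hρ.1]))
  have hsq : ((-1 : ℝ) ^ i) * (-1) ^ i = 1 := by rw [← mul_pow]; norm_num
  calc 0 < t⁻¹ ^ n * (1 - t⁻¹) * ((-1) ^ i * aeval t⁻¹ f)
        + 2 * t⁻¹ ^ (f.natDegree + 1) * aeval t f :=
        add_pos_of_nonneg_of_pos
          (mul_nonneg (by positivity) (hs.2 t ⟨hρt.le, ht.2⟩).le)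
          (mul_pos (by positivity) (hs.1 t ⟨hρt, ht.2⟩))
    _ = (-1) ^ (i + 1) * aeval t⁻¹ (_root_.stepPoly n i f) := by
        rw [aeval_stepPoly, aeval_reverse f (inv_ne_zero ht0.ne'), inv_inv]
        linear_combination (-2 * t⁻¹ ^ (f.natDegree + 1) * aeval t f) * hsq

theorem norm_lt_of_aeval_eq_zero (hf : GrowthBounds δ γ i f) (hδ : 0 ≤ δ) (hγ0 : 0 ≤ γ)
    (hγ1 : γ ≤ 1) {n : ℕ} (hn : 2 * 4 ^ i ≤ γ ^ (i + 1) * (1 + δ) ^ n) {z : ℂ}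
    (hz : aeval z (X ^ n * f + (-1) ^ (i + 1) * f.reverse) = 0) : ‖z‖ < 1 + δ := by
  by_contra! hr
  have hr1 : 1 ≤ ‖z‖ := by linarith
  have heq : ‖z‖ ^ n * ‖aeval z f‖ = ‖aeval z f.reverse‖ := by
    have h : z ^ n * aeval z f = -((-1) ^ (i + 1) * aeval z f.reverse) := by
      simpa [add_eq_zero_iff_eq_neg] using hz
    simpa using congrArg norm h
  refine lt_irrefl ‖aeval z f.reverse‖ ?_
  calc ‖aeval z f.reverse‖ ≤ 4 ^ i * ‖z‖ ^ f.natDegree := by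
        simpa [max_eq_right hr1] using hf.norm_aeval_reverse_le z
    _ < γ ^ i * ‖z‖ ^ n * ‖z‖ ^ f.natDegree := by
        gcongr
        exact four_pow_lt_mul_pow hδ hγ0 hγ1 hn hr
    _ = ‖z‖ ^ n * (γ ^ i * ‖z‖ ^ f.natDegree) := by ring
    _ ≤ ‖aeval z f.reverse‖ := heq ▸ by gcongr; exact hf.le_norm z hr

theorem exists_root_gt_one (hf : GrowthBounds δ γ i f) (hδ : 0 ≤ δ) (hγ0 : 0 ≤ γ)
    (hγ1 : γ ≤ 1) {n : ℕ} (hn : 2 * 4 ^ i ≤ γ ^ (i + 1) * (1 + δ) ^ n) {ρ : ℝ}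
    (hρ : ρ ∈ Ioo 1 (1 + δ)) (hfρ : aeval ρ f = 0) (hs : SignsAbove δ i f ρ) :
    ∃ τ : ℝ, 1 < τ ∧ aeval τ (X ^ n * f + (-1) ^ (i + 1) * f.reverse) = 0 := by
  have hρ0 : 0 < ρ := one_pos.trans hρ.1
  have hneg : aeval ρ (X ^ n * f + (-1) ^ (i + 1) * f.reverse) < 0 :=
    calc aeval ρ (X ^ n * f + (-1) ^ (i + 1) * f.reverse)
        = -(ρ ^ f.natDegree * ((-1) ^ i * aeval ρ⁻¹ f)) := by
          simp [aeval_reverse f hρ0.ne', hfρ]; ring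
      _ < 0 := neg_neg_of_pos (mul_pos (by positivity) (hs.2 ρ ⟨le_rfl, hρ.2.le⟩))
  have hpos : 0 < aeval (1 + δ) (X ^ n * f + (-1) ^ (i + 1) * f.reverse) := by
    have hgap := four_pow_lt_mul_pow hδ hγ0 hγ1 hn le_rfl
    calc 0 < (γ ^ i * (1 + δ) ^ n - 4 ^ i) * (1 + δ) ^ f.natDegree := by
          have := sub_pos.2 hgap; positivity
      _ = (1 + δ) ^ n * (γ ^ i * (1 + δ) ^ f.natDegree) - 4 ^ i * (1 + δ) ^ f.natDegree := by ring
      _ ≤ (1 + δ) ^ n * aeval (1 + δ) f - |aeval (1 + δ) f.reverse| := by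
          gcongr
          · exact hf.le_aeval_one_add hδ (hs.1 _ ⟨hρ.2, le_rfl⟩)
          · exact hf.abs_aeval_reverse_le (by linarith)
      _ ≤ _ := by
          have := neg_abs_le_neg_one_pow_mul (i + 1) (aeval (1 + δ) f.reverse)
          simp only [map_add, map_mul, map_pow, aeval_X, map_neg, map_one]
          linarith
  obtain ⟨τ, hτ, hτ0⟩ := intermediate_value_Icc hρ.2.le
    (Polynomial.continuous_aeval _).continuousOn ⟨hneg.le, hpos.le⟩
  exact ⟨τ, hρ.1.trans_le hτ.1, hτ0⟩

end GrowthBounds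

theorem Rpoly_growthBounds (hδ : 0 < δ) (hγ0 : 0 < γ) (hγ : 2 * γ * (1 + δ) ≤ δ)
    {m : ℕ → ℕ} {k : ℕ} (hm : ∀ i < k, 2 * 4 ^ i ≤ γ ^ (i + 1) * (1 + δ) ^ m (i + 1)) {i : ℕ}
    (hi : 1 ≤ i) (hik : i ≤ k) :
    GrowthBounds δ γ i (Rpoly m i) ∧
      ∃ ρ ∈ Ioo 1 (1 + δ), aeval ρ (Rpoly m i) = 0 ∧ SignsAbove δ i (Rpoly m i) ρ := by
  induction i, hi using Nat.le_induction with
  | base =>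
    have hm₀ := hm 0 (by omega)
    rw [Rpoly_one]
    exact ⟨growthBounds_X.stepPoly hδ.le hγ0 hγ hm₀, growthBounds_X.exists_root_stepPoly hδ.le
      hγ0 hγ hm₀ ⟨le_rfl, by linarith⟩ (by simp) signsAbove_X⟩
  | succ i hi ih =>
    obtain ⟨hf, ρ, hρ, hroot, hs⟩ := ih (by omega)
    obtain ⟨j, rfl⟩ : ∃ j, i = j + 1 := ⟨i - 1, by omega⟩
    have hmj := hm (j + 1) (by omega)
    obtain ⟨ρ', hρ', hroot', hs'⟩ := hf.exists_root_stepPoly hδ.le hγ0 hγ hmj ⟨hρ.1.le, hρ.2⟩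
      (by rw [hroot, mul_zero]) hs
    rw [Rpoly_add_two]
    exact ⟨hf.stepPoly hδ.le hγ0 hγ hmj, ρ', ⟨hρ.1.trans hρ'.1, hρ'.2⟩, hroot', hs'⟩

/-- Theorem 1.3(1), polynomial form: for fixed `k ≥ 1`,
`λ(P_{(m_1,…,m_{k+1})}) → 1` as `m_1, …, m_{k+1}` all tend to `∞`. -/
theorem Ppoly_maxRootAbs_tendsto_one (k : ℕ) (hk : 1 ≤ k) :
    ∀ ε : ℝ, 0 < ε → ∃ M : ℕ, 1 ≤ M ∧
      ∀ m : ℕ → ℕ, (∀ j, 1 ≤ j → j ≤ k + 1 → M ≤ m j) →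
        1 < maxRootAbs (Ppoly m k) ∧ maxRootAbs (Ppoly m k) < 1 + ε := by
  intro ε hε
  set δ := ε / 2 with hδ_def
  set γ := δ / (2 * (1 + δ)) with hγ_def
  have hδ : 0 < δ := by positivity
  have hγ0 : 0 < γ := by positivity
  have hγ : 2 * γ * (1 + δ) = δ := by rw [hγ_def]; field_simp
  have hγ1 : γ ≤ 1 := by nlinarith
  obtain ⟨M, hM⟩ := pow_unbounded_of_one_lt (2 * 4 ^ k / γ ^ (k + 1)) (by linarith : 1 < 1 + δ)
  refine ⟨M + 1, Nat.le_add_left 1 M, fun m hm => ?_⟩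
  have hmi : ∀ i ≤ k, 2 * 4 ^ i ≤ γ ^ (i + 1) * (1 + δ) ^ m (i + 1) := fun i hi =>
    two_mul_four_pow_le hγ0 hγ1 (by linarith) hi ((M.le_succ).trans (hm _ (by omega) (by omega))) hM
  obtain ⟨hR, ρ, hρ, hroot, hs⟩ :=
    Rpoly_growthBounds hδ hγ0 hγ.le (fun i hi => hmi i hi.le) hk le_rfl
  have hroots (z : ℂ) (hz : aeval z (Ppoly m k) = 0) : ‖z‖ ≤ 1 + δ :=
    (hR.norm_lt_of_aeval_eq_zero hδ.le hγ0.le hγ1 (hmi k le_rfl) hz).le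
  obtain ⟨τ, hτ, hτroot⟩ := hR.exists_root_gt_one hδ.le hγ0.le hγ1 (hmi k le_rfl) hρ hroot hs
  have hτroot' : aeval (τ : ℂ) (Ppoly m k) = 0 := by
    rw [aeval_int_ofReal, Ppoly, hτroot, Complex.ofReal_zero]
  constructor
  · calc 1 < τ := hτ
      _ = ‖(τ : ℂ)‖ := by rw [Complex.norm_real, Real.norm_of_nonneg (by linarith)]
      _ ≤ maxRootAbs (Ppoly m k) := le_maxRootAbs hroots hτroot'
  · calc maxRootAbs (Ppoly m k) ≤ 1 + δ := maxRootAbs_le hroots hτroot'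
      _ < 1 + ε := by linarith [hδ_def]
end

section
/- Fix integers k ≥ 1 and m_1, …, m_{k+1} ≥ 1. The polynomial P = P_{(m_1,…,m_{k+1})} satisfies P_*(t) = (−1)^{k+1} P(t), where P_*(t) = t^{deg P} P(1/t) is the reciprocal polynomial; that is, P is reciprocal when k is odd and anti-reciprocal when k is even. -/
open Polynomial

/-! If `f` has degree `d` and `n ≥ 1`, the summand `X ^ n * f` carries the whole degree `n + d`
of `P = X ^ n * f + C u * f.reverse`, and reflecting in degree `n + d` swaps the two summands
(`X ^ n * f ↦ f.reverse ↦ X ^ n * f`); with `u * u = 1` this gives `P.reverse = C u * P`.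
The claim is the case `f = R_{(m_1,…,m_k)}`, `n = m_{k+1}`, `u = (-1)^{k+1}`. -/

theorem reflect_X_pow_mul {R : Type*} [Semiring R] (f : R[X]) (n : ℕ) :
    reflect (n + f.natDegree) (X ^ n * f) = f.reverse := by
  rw [reflect_mul _ _ (natDegree_X_pow_le n) le_rfl, reflect_monomial, revAt_le le_rfl,
    Nat.sub_self, pow_zero, one_mul, reverse]

theorem natDegree_X_pow_mul_add_C_mul_reverse {R : Type*} [Semiring R] {f : R[X]} (hf : f ≠ 0)
    {n : ℕ} (hn : n ≠ 0) (u : R) :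
    (X ^ n * f + C u * f.reverse).natDegree = n + f.natDegree := by
  have : Nontrivial R := nontrivial_iff.mp (nontrivial_of_ne f 0 hf)
  have hlt : (C u * f.reverse).natDegree < (X ^ n * f).natDegree :=
    calc (C u * f.reverse).natDegree ≤ f.reverse.natDegree := natDegree_C_mul_le u _
      _ ≤ f.natDegree := reverse_natDegree_le f
      _ < (X ^ n * f).natDegree := by rw [natDegree_X_pow_mul n hf]; omega
  rw [natDegree_add_eq_left_of_natDegree_lt hlt, natDegree_X_pow_mul n hf, add_comm]

theorem reverse_X_pow_mul_add_C_mul_reverse {R : Type*} [CommSemiring R] (f : R[X]) {n : ℕ}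
    (hn : n ≠ 0) {u : R} (hu : u * u = 1) :
    (X ^ n * f + C u * f.reverse).reverse = C u * (X ^ n * f + C u * f.reverse) := by
  rcases eq_or_ne f 0 with rfl | hf
  · simp
  have hswap : reflect (n + f.natDegree) f.reverse = X ^ n * f := by
    rw [← reflect_X_pow_mul, reflect_reflect]
  rw [reverse, natDegree_X_pow_mul_add_C_mul_reverse hf hn, reflect_add, reflect_C_mul,
    reflect_X_pow_mul, hswap, mul_add, ← mul_assoc (C u) (C u), ← C_mul, hu, C_1, one_mul,
    add_comm]

theorem Ppoly_reverse_general (k : ℕ) (m : ℕ → ℕ)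
    (hm : ∀ j, 1 ≤ j → j ≤ k + 1 → 1 ≤ m j) :
    (Ppoly m k).reverse = (-1 : Polynomial ℤ) ^ (k + 1) * Ppoly m k := by
  have hsign : (-1 : ℤ[X]) ^ (k + 1) = C ((-1) ^ (k + 1)) := by simp
  have hm_ne : m (k + 1) ≠ 0 := Nat.one_le_iff_ne_zero.mp (hm (k + 1) (by omega) le_rfl)
  rw [Ppoly, hsign]
  exact reverse_X_pow_mul_add_C_mul_reverse _ hm_ne (by rw [← mul_pow]; norm_num)

/-- Claim 4.2 of the paper: `P_{(m_1,…,m_{k+1})}` satisfies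
`P_* = (-1)^{k+1} P`, where `P_*` is the reciprocal polynomial
`t^(deg P) P(1/t)`. -/
theorem Ppoly_reverse (k : ℕ) (hk : 1 ≤ k) (m : ℕ → ℕ)
    (hm : ∀ j, 1 ≤ j → j ≤ k + 1 → 1 ≤ m j) :
    (Ppoly m k).reverse = (-1 : Polynomial ℤ) ^ (k + 1) * Ppoly m k :=
  Ppoly_reverse_general k m hm
end

section
/- The maximal absolute value of the complex roots of R_{(m_1)}(t) = t^{m_1+1}(t−1) − 2t tends to 1 as m_1 → ∞; that is, for every ε > 0 there exists an integer M such that for all integers m_1 ≥ M, every complex root z of t^{m_1+1}(t−1) − 2t satisfies |z| < 1 + ε, while R_{(m_1)} always has a real root strictly greater than 1. -/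
open Polynomial Filter

/-! Dividing by `t`, a nonzero root `z` of `R_{(m)}` satisfies `z ^ m * (z - 1) = 2`. If
`‖z‖ ≥ 1 + ε` then `‖z - 1‖ ≥ ε`, so `2 ≥ (1 + ε) ^ m * ε`, which fails for large `m`.
The real root above `1` comes from the intermediate value theorem applied to
`x ↦ x ^ m * (x - 1)` on `[1, 3]`. -/

lemma aeval_X_pow_succ_mul_X_sub_one_sub_two_mul_X {A : Type*} [CommRing A] (z : A) (m : ℕ) :
    aeval z ((X : ℤ[X]) ^ (m + 1) * (X - 1) - 2 * X) = z * (z ^ m * (z - 1) - 2) := by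
  simp only [map_sub, map_mul, map_pow, aeval_X, map_one, map_ofNat]
  ring

lemma norm_lt_one_add_of_pow_mul_sub_one_eq {𝕜 : Type*} [NormedDivisionRing 𝕜] {z c : 𝕜}
    {m : ℕ} {ε : ℝ} (hε : 0 < ε) (hz : z ^ m * (z - 1) = c) (hc : ‖c‖ < (1 + ε) ^ m * ε) :
    ‖z‖ < 1 + ε := by
  by_contra! hle
  have hsub : ε ≤ ‖z - 1‖ := by
    linarith [norm_sub_norm_le z 1, norm_one (α := 𝕜)]
  have : (1 + ε) ^ m * ε ≤ ‖c‖ := by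
    rw [← hz, norm_mul, norm_pow]
    gcongr
  linarith

lemma exists_one_lt_pow_mul_sub_one_eq (m : ℕ) {c : ℝ} (hc : 0 < c) :
    ∃ x : ℝ, 1 < x ∧ x ^ m * (x - 1) = c := by
  have hcont : ContinuousOn (fun x : ℝ => x ^ m * (x - 1)) (Set.Icc 1 (1 + c)) := by
    fun_prop
  have hright : c ≤ (1 + c) ^ m * (1 + c - 1) := by
    rw [add_sub_cancel_left]
    exact le_mul_of_one_le_left hc.le (one_le_pow₀ (by linarith))
  obtain ⟨x, ⟨hx1, -⟩, hx⟩ := intermediate_value_Icc (by linarith) hcont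
    ⟨by simp [hc.le], hright⟩
  refine ⟨x, hx1.lt_of_ne ?_, hx⟩
  rintro rfl
  simp [hc.ne] at hx

/-- The maximal absolute value of the complex roots of
`R_{(m_1)}(t) = t^{m_1+1}(t-1) - 2t` tends to `1` as `m_1 → ∞`: for every `ε > 0`
all complex roots of `R_{(m_1)}` have absolute value `< 1 + ε` once `m_1` is large,
while `R_{(m_1)}` always has a real root strictly greater than `1`. -/
theorem Rpoly_base_roots_tendsto_one :
    (∀ ε : ℝ, 0 < ε → ∃ M : ℕ, ∀ m₁ : ℕ, M ≤ m₁ →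
      ∀ z : ℂ, Polynomial.aeval z ((X : Polynomial ℤ) ^ (m₁ + 1) * (X - 1) - 2 * X) = 0 →
        ‖z‖ < 1 + ε) ∧
    (∀ m₁ : ℕ, 1 ≤ m₁ → ∃ x : ℝ, 1 < x ∧
      Polynomial.aeval x ((X : Polynomial ℤ) ^ (m₁ + 1) * (X - 1) - 2 * X) = 0) := by
  constructor
  · intro ε hε
    have hlarge : ∀ᶠ m in atTop, (2 : ℝ) < (1 + ε) ^ m * ε :=
      ((tendsto_pow_atTop_atTop_of_one_lt (by linarith)).atTop_mul_const hε).eventually_gt_atTop 2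
    obtain ⟨M, hM⟩ := eventually_atTop.1 hlarge
    refine ⟨M, fun m hm z hz => ?_⟩
    rw [aeval_X_pow_succ_mul_X_sub_one_sub_two_mul_X, mul_eq_zero, sub_eq_zero] at hz
    rcases hz with rfl | hz
    · rw [norm_zero]; linarith
    · exact norm_lt_one_add_of_pow_mul_sub_one_eq hε hz (by simpa using hM m hm)
  · intro m _
    obtain ⟨x, hx1, hx⟩ := exists_one_lt_pow_mul_sub_one_eq m two_pos
    exact ⟨x, hx1, by rw [aeval_X_pow_succ_mul_X_sub_one_sub_two_mul_X, hx, sub_self, mul_zero]⟩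
end
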